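/- arXiv:1312.7495 — 11 statements merged into one kernel-verified Lean document; each statement's English description precedes it below -/
import Mathlib

section
/- If G is a uniquely k-colorable graph, then for any k-coloring of G, the subgraph induced by the union of any two color classes is connected. -/
open SimpleGraph

/-- `G` is uniquely `k`-colorable: its chromatic number is `k` and all proper
`k`-colorings induce the same partition of the vertex set into color classes. -/
def UniquelyKColorable {V : Type} (G : SimpleGraph V) (k : ℕ) : Prop :=
  G.chromaticNumber = k ∧
    ∀ c₁ c₂ : G.Coloring (Fin k), ∀ u v : V, c₁ u = c₁ v ↔ c₂ u = c₂ v

/-- `G` is an edge-critical uniquely `k`-colorable graph. -/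
def EdgeCritical {V : Type} (G : SimpleGraph V) (k : ℕ) : Prop :=
  UniquelyKColorable G k ∧
    ∀ e ∈ G.edgeSet, ¬ UniquelyKColorable (G.deleteEdges {e}) k

/-- A combinatorial plane embedding of `G`: a family of faces, each with a closed
boundary walk, such that every edge lies on face boundaries exactly twice in total,
and Euler's formula holds. -/
structure PlaneEmbedding {V : Type} [DecidableEq V] (G : SimpleGraph V) where
  Faces : Type
  [facesFintype : Fintype Faces]
  boundary : Faces → Σ v : V, G.Walk v v
  edge_count : ∀ e ∈ G.edgeSet, (∑ f : Faces, ((boundary f).2.edges.count e)) = 2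
  euler : Nat.card V + Nat.card Faces = G.edgeSet.ncard + 1 + Nat.card G.ConnectedComponent

attribute [instance] PlaneEmbedding.facesFintype

/-- The degree of a face: the length of its boundary walk (cut edges counted twice). -/
def PlaneEmbedding.fdeg {V : Type} [DecidableEq V] {G : SimpleGraph V}
    (emb : PlaneEmbedding G) (f : emb.Faces) : ℕ :=
  (emb.boundary f).2.length

def Planar {V : Type} [DecidableEq V] (G : SimpleGraph V) : Prop :=
  Nonempty (PlaneEmbedding G)

/-- Outerplanar: a plane embedding with one face incident with all vertices. -/
def Outerplanar {V : Type} [DecidableEq V] (G : SimpleGraph V) : Prop :=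
  ∃ emb : PlaneEmbedding G, ∃ f : emb.Faces, ∀ v : V, v ∈ (emb.boundary f).2.support

def MaximalOuterplanar {V : Type} [DecidableEq V] (G : SimpleGraph V) : Prop :=
  Outerplanar G ∧ ∀ u v : V, u ≠ v → ¬ G.Adj u v →
    ¬ Outerplanar (G ⊔ SimpleGraph.fromEdgeSet {s(u, v)})

/-- `s` is the edge set of a cycle of `G`. -/
def IsCycleSet {V : Type} (G : SimpleGraph V) (s : Set (Sym2 V)) : Prop :=
  ∃ (v : V) (w : G.Walk v v), w.IsCycle ∧ {e | e ∈ w.edges} = s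

/-- Two cycles (given by their edge sets) are dependent: joined by a chain of cycles
in which consecutive cycles share an edge and all intermediate cycles have 4 vertices. -/
def Dependent {V : Type} (G : SimpleGraph V) (s s' : Set (Sym2 V)) : Prop :=
  ∃ (t : ℕ) (C : Fin (t + 2) → Set (Sym2 V)),
    (∀ i, IsCycleSet G (C i)) ∧ C 0 = s ∧ C (Fin.last (t + 1)) = s' ∧
    (∀ i : Fin (t + 1), (C i.castSucc ∩ C i.succ).Nonempty) ∧
    ∀ i : Fin (t + 2), i ≠ 0 → i ≠ Fin.last (t + 1) → (C i).ncard = 4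

/-- `G` has no separating 3-cycle: deleting the vertices of any triangle leaves a
connected graph. -/
def NoSeparating3Cycle {V : Type} (G : SimpleGraph V) : Prop :=
  ∀ s : Finset V, G.IsNClique 3 s → (G.induce {v : V | v ∉ s}).Connected

/-- `H` is a triangle-subgraph of `G`: the union of a sequence of triangles each of
which (after the first) shares an edge with an earlier one. -/
def IsTriangleSubgraph {V : Type} (G : SimpleGraph V) (H : G.Subgraph) : Prop :=
  ∃ (t : ℕ) (T : Fin (t + 1) → Finset V),
    (∀ i, G.IsNClique 3 (T i)) ∧
    (∀ j : Fin (t + 1), j ≠ 0 →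
      ∃ i : Fin (t + 1), i < j ∧ ((T i : Set V) ∩ (T j : Set V)).ncard = 2) ∧
    H = ⨆ i, (⊤ : G.Subgraph).induce (T i : Set V)

def MaximalTriangleSubgraph {V : Type} (G : SimpleGraph V) (H : G.Subgraph) : Prop :=
  IsTriangleSubgraph G H ∧ ∀ H' : G.Subgraph, IsTriangleSubgraph G H' → ¬ H < H'

/-- The set of edges of `G` with one end in `A` and the other in `B`. -/
def edgesBetween {V : Type} (G : SimpleGraph V) (A B : Set V) : Set (Sym2 V) :=
  {e | ∃ a ∈ A, ∃ b ∈ B, G.Adj a b ∧ e = s(a, b)}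
/-- In a uniquely `k`-colorable graph, for any `k`-coloring, the subgraph induced by
the union of any two color classes is connected. -/
theorem stmt_0 {V : Type} (G : SimpleGraph V) (k : ℕ)
    (hG : UniquelyKColorable G k) (c : G.Coloring (Fin k)) (i j : Fin k) (hij : i ≠ j) :
    (G.induce {v : V | c v = i ∨ c v = j}).Connected := by
  classical
  set A : Set V := {v : V | c v = i ∨ c v = j} with hA
  -- each color class is nonempty
  have hne : ∀ m : Fin k, ∃ v, c v = m := by
    intro m
    by_contra h
    push_neg at h
    let d : G.Coloring {x : Fin k // x ≠ m} :=
      SimpleGraph.Coloring.mk (fun v => ⟨c v, h v⟩)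
        (fun hadj => by simpa [Subtype.ext_iff] using c.valid hadj)
    have hcol : G.Colorable (k - 1) := by
      have hc := d.colorable
      rwa [show Fintype.card {x : Fin k // x ≠ m} = k - 1 by
        simp [Fintype.card_subtype_compl]] at hc
    have hle : G.chromaticNumber ≤ (k - 1 : ℕ) := hcol.chromaticNumber_le
    rw [hG.1, Nat.cast_le] at hle
    have hk : 1 ≤ k := m.pos
    omega
  obtain ⟨a0, ha0⟩ := hne i
  have ha0A : a0 ∈ A := Or.inl ha0
  haveI : Nonempty A := ⟨⟨a0, ha0A⟩⟩
  refine ⟨?_⟩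
  rintro ⟨a, ha⟩ ⟨b, hb⟩
  by_contra hreach
  -- set of vertices reachable from a inside the induced graph
  let R : Set V := {x | ∃ hx : x ∈ A, (G.induce A).Reachable ⟨a, ha⟩ ⟨x, hx⟩}
  have hRA : ∀ {x}, x ∈ R → x ∈ A := fun hx => hx.1
  have hext : ∀ {u v : V}, u ∈ R → v ∈ A → G.Adj u v → v ∈ R := by
    rintro u v ⟨hu, hru⟩ hv hadj
    exact ⟨hv, hru.trans (SimpleGraph.Adj.reachable (by simpa using hadj))⟩
  have haR : a ∈ R := ⟨ha, SimpleGraph.Reachable.refl _⟩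
  have hbR : b ∉ R := by
    rintro ⟨hb', hrb⟩
    exact hreach (by convert hrb)
  -- the swapped coloring
  let c₂ : G.Coloring (Fin k) :=
    SimpleGraph.Coloring.mk (fun x => if x ∈ R then Equiv.swap i j (c x) else c x)
      (by
        intro u v hadj
        by_cases hu : u ∈ R <;> by_cases hv : v ∈ R <;>
          simp only [hu, hv, if_true, if_false, if_pos, if_neg]
        · exact fun h => c.valid hadj ((Equiv.swap i j).injective h)
        · have hvA : v ∉ A := fun hvA => hv (hext hu hvA hadj)
          have hcu : c u = i ∨ c u = j := hRA hu
          intro h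
          rcases hcu with h1 | h1 <;> rw [h1] at h <;>
            simp [Equiv.swap_apply_left, Equiv.swap_apply_right] at h <;>
            exact hvA (by simp [hA, ← h])
        · have huA : u ∉ A := fun huA => hu (hext hv huA hadj.symm)
          have hcv : c v = i ∨ c v = j := hRA hv
          intro h
          rcases hcv with h1 | h1 <;> rw [h1] at h <;>
            simp [Equiv.swap_apply_left, Equiv.swap_apply_right] at h <;>
            exact huA (by simp [hA, h])
        · exact c.valid hadj)
  have key := (hG.2 c c₂ a b)
  have hc2a : c₂ a = Equiv.swap i j (c a) := if_pos haR
  have hc2b : c₂ b = c b := if_neg hbR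
  by_cases hab : c a = c b
  · have : c₂ a = c₂ b := key.mp hab
    rw [hc2a, hc2b, hab] at this
    rcases hb with h1 | h1 <;> rw [h1] at this <;>
      simp [Equiv.swap_apply_left, Equiv.swap_apply_right] at this <;>
      exact hij (by simp [this])
  · apply hab
    apply key.mpr
    rw [hc2a, hc2b]
    rcases ha with h1 | h1 <;> rcases hb with h2 | h2 <;>
      rw [h1, h2] <;>
      simp_all [Equiv.swap_apply_left, Equiv.swap_apply_right]
end

section
/- Every uniquely k-colorable graph G has at least (k-1)|V(G)| - k(k-1)/2 edges. -/
open SimpleGraph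

/-!
Fix a `k`-coloring `c`; it is onto since `χ(G) = k`. For colors `i ≠ j` the subgraph induced by
the two color classes is connected: otherwise swapping `i` and `j` on one of its components
(a Kempe change) gives a `k`-coloring inducing a different partition. A connected graph on
`nᵢ + nⱼ` vertices has at least `nᵢ + nⱼ - 1` edges. Summing over the `k(k-1)/2` pairs of
colors, each vertex lying in `k - 1` of them, gives `|E| ≥ (k-1)|V| - k(k-1)/2`.
-/

open Finset

namespace SimpleGraph

variable {V W α : Type*} {G : SimpleGraph V} {H : SimpleGraph W}

section recolorOn

variable (c : G.Coloring α) (σ : Equiv.Perm α) (X : Set V)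
  (hX : ∀ ⦃a b⦄, G.Adj a b → a ∈ X → b ∉ X → σ (c a) ≠ c b)

open Classical in
noncomputable def Coloring.recolorOn : G.Coloring α :=
  Coloring.mk (fun v => if v ∈ X then σ (c v) else c v) fun {a b} hab => by
    by_cases ha : a ∈ X <;> by_cases hb : b ∈ X <;> simp only [ha, hb, if_true, if_false]
    · exact σ.injective.ne (c.valid hab)
    · exact hX hab ha hb
    · exact (hX hab.symm hb ha).symm
    · exact c.valid hab

variable {c σ X}

theorem Coloring.recolorOn_apply_of_mem {v : V} (hv : v ∈ X) : c.recolorOn σ X hX v = σ (c v) :=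
  if_pos hv

theorem Coloring.recolorOn_apply_of_notMem {v : V} (hv : v ∉ X) : c.recolorOn σ X hX v = c v :=
  if_neg hv

end recolorOn

theorem Coloring.preconnected_induce_of_forall_eq_iff
    (hunique : ∀ c₁ c₂ : G.Coloring α, ∀ u v, c₁ u = c₁ v ↔ c₂ u = c₂ v)
    (c : G.Coloring α) {i j : α} (hij : i ≠ j) :
    (G.induce {v | c v ∈ s(i, j)}).Preconnected := by
  classical
  set S := {v | c v ∈ s(i, j)}
  rintro ⟨u, hu⟩ ⟨w, hw⟩
  by_contra hnr
  let X : Set V := {v | ∃ hv : v ∈ S, (G.induce S).Reachable ⟨u, hu⟩ ⟨v, hv⟩}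
  have hX : ∀ ⦃a b⦄, G.Adj a b → a ∈ X → b ∉ X → Equiv.swap i j (c a) ≠ c b := by
    rintro a b hab ⟨ha, hua⟩ hb hswap
    refine hb ⟨?_, hua.trans (Adj.reachable (induce_adj.mpr hab))⟩
    simp only [S, Set.mem_ofPred_eq, Sym2.mem_iff, ← hswap] at ha ⊢
    rcases ha with ha | ha <;> simp [ha]
  have hu' := c.recolorOn_apply_of_mem hX (show u ∈ X from ⟨hu, .rfl⟩)
  have hw' := c.recolorOn_apply_of_notMem hX (show w ∉ X from fun ⟨_, huw⟩ => hnr huw)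
  have := hunique c (c.recolorOn _ X hX) u w
  rw [hu', hw'] at this
  simp only [S, Set.mem_ofPred_eq, Sym2.mem_iff] at hu hw
  rcases hu with hu | hu <;> rcases hw with hw | hw <;>
    simp [hu, hw, hij, hij.symm, Equiv.swap_apply_left, Equiv.swap_apply_right] at this

variable [Fintype V] [DecidableEq W]

theorem Hom.card_filter_mem_le_card_fiber_add_one [DecidableRel G.Adj] (f : G →g H)
    {e : Sym2 W} (hconn : (G.induce {v | f v ∈ e}).Connected) :
    #{v | f v ∈ e} ≤ #{e' ∈ G.edgeFinset | e'.map f = e} + 1 := by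
  set S := {v | f v ∈ e}
  set F := {e' ∈ G.edgeFinset | e'.map f = e}
  have hmaps : ∀ x : (G.induce S).edgeSet, ((Embedding.induce S).mapEdgeSet x : Sym2 V) ∈ F := by
    rintro ⟨x, hx⟩
    induction x with
    | _ a b =>
      have hab : G.Adj a b := hx
      refine mem_filter.mpr ⟨mem_edgeFinset.mpr hab, ?_⟩
      show Sym2.map f s((a : V), b) = e
      rw [Sym2.map_mk]
      exact ((Sym2.mem_and_mem_iff (f.map_adj hab).ne).mp ⟨a.2, b.2⟩).symm
  have hedge : Nat.card (G.induce S).edgeSet ≤ #F := by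
    rw [← Fintype.card_coe, ← Nat.card_eq_fintype_card]
    refine Nat.card_le_card_of_injective (fun x => ⟨_, hmaps x⟩) fun x y hxy => ?_
    exact (Embedding.induce S).mapEdgeSet.injective (Subtype.ext (congrArg Subtype.val hxy :))
  calc #{v | f v ∈ e} = Nat.card S := by simp [S]
    _ ≤ _ := hconn.card_vert_le_card_edgeSet_add_one.trans (by omega)

theorem Hom.card_edgeFinset_eq_sum_card_fiber [DecidableRel G.Adj] [Fintype W] [DecidableRel H.Adj]
    (f : G →g H) :
    #G.edgeFinset = ∑ e ∈ H.edgeFinset, #{e' ∈ G.edgeFinset | e'.map f = e} :=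
  card_eq_sum_card_fiberwise fun e' he' => by
    rw [coe_edgeFinset] at he' ⊢
    exact f.map_mem_edgeSet he'

theorem Hom.sum_card_filter_mem_eq_sum_degree [Fintype W] [DecidableRel H.Adj] (f : G →g H) :
    ∑ e ∈ H.edgeFinset, #{v | f v ∈ e} = ∑ v, H.degree (f v) := by
  simp only [card_filter]
  rw [sum_comm]
  refine sum_congr rfl fun v _ => ?_
  rw [← card_filter, ← card_incidenceFinset_eq_degree, incidenceFinset_eq_filter]

theorem Hom.sum_degree_le_card_edgeFinset_add [DecidableRel G.Adj] [Fintype W] [DecidableRel H.Adj]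
    (f : G →g H) (hconn : ∀ e ∈ H.edgeSet, (G.induce {v | f v ∈ e}).Connected) :
    ∑ v, H.degree (f v) ≤ #G.edgeFinset + #H.edgeFinset := by
  calc ∑ v, H.degree (f v) = ∑ e ∈ H.edgeFinset, #{v | f v ∈ e} :=
        (f.sum_card_filter_mem_eq_sum_degree).symm
    _ ≤ ∑ e ∈ H.edgeFinset, (#{e' ∈ G.edgeFinset | e'.map f = e} + 1) :=
        sum_le_sum fun e he =>
          f.card_filter_mem_le_card_fiber_add_one (hconn e (mem_edgeFinset.mp he))
    _ = #G.edgeFinset + #H.edgeFinset := by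
        rw [sum_add_distrib, ← f.card_edgeFinset_eq_sum_card_fiber, sum_const, smul_eq_mul,
          mul_one]

end SimpleGraph

theorem UniquelyKColorable.card_mul_sub_one_le {V : Type} [Fintype V] {G : SimpleGraph V} {k : ℕ}
    [DecidableRel G.Adj] (hG : UniquelyKColorable G k) :
    Fintype.card V * (k - 1) ≤ #G.edgeFinset + k.choose 2 := by
  obtain ⟨c⟩ : G.Colorable k := chromaticNumber_le_iff_colorable.mp hG.1.le
  have hsurj := le_chromaticNumber_iff_forall_surjective.mp hG.1.ge c
  have hconn : ∀ e ∈ (⊤ : SimpleGraph (Fin k)).edgeSet, (G.induce {v | c v ∈ e}).Connected := by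
    intro e he
    induction e with
    | _ i j =>
      obtain ⟨v, hv⟩ := hsurj i
      have : Nonempty {v | c v ∈ s(i, j)} := ⟨⟨v, by simp [hv]⟩⟩
      exact ⟨c.preconnected_induce_of_forall_eq_iff hG.2 (by simpa using he)⟩
  have := c.sum_degree_le_card_edgeFinset_add hconn
  rw [card_edgeFinset_top_eq_card_choose_two] at this
  simpa [mul_comm] using this

/-- A uniquely `k`-colorable graph has at least `(k-1)|V| - k(k-1)/2` edges. -/
theorem stmt_1 {V : Type} [Fintype V] (G : SimpleGraph V) (k : ℕ)
    (hG : UniquelyKColorable G k) :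
    ((k : ℤ) - 1) * (Fintype.card V : ℤ) - (k : ℤ) * ((k : ℤ) - 1) / 2 ≤
      (G.edgeSet.ncard : ℤ) := by
  classical
  have h := hG.card_mul_sub_one_le
  rw [← coe_edgeFinset, Set.ncard_coe_finset]
  rcases k with _ | k
  · simp
  · rw [Nat.choose_two_right, Nat.add_sub_cancel] at h
    zify at h
    push_cast [add_sub_cancel_right]
    linarith [mul_comm (Fintype.card V : ℤ) k]
end

section
/- If a uniquely k-colorable graph G has exactly (k-1)|V(G)| - k(k-1)/2 edges, then G is edge-critical, i.e., for every edge e of G the graph G - e is not uniquely k-colorable. -/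
open SimpleGraph

/-!
In a uniquely `k`-colorable graph with color classes `V₁, …, Vₖ`, the subgraph induced by
`Vᵢ ∪ Vⱼ` is connected for all `i ≠ j`: otherwise swapping the colors `i` and `j` on one of
its components (a Kempe change) would give a coloring with a different partition. A connected
graph on `|Vᵢ| + |Vⱼ|` vertices has at least `|Vᵢ| + |Vⱼ| - 1` edges, and these edge sets are
disjoint for different pairs `{i, j}`, so summing over the `k.choose 2` pairs gives
`|E(G)| ≥ (k - 1)|V(G)| - k.choose 2`. Deleting an edge from a graph attaining this bound
leaves a graph below it, which therefore cannot be uniquely `k`-colorable.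
-/

open Finset

namespace SimpleGraph

variable {V α : Type*} {G : SimpleGraph V} [DecidableEq α]

lemma Coloring.exists_swap_on (c : G.Coloring α) (i j : α) (R : Set V) [DecidablePred (· ∈ R)]
    (hR : ∀ ⦃u v⦄, G.Adj u v → u ∈ R → c v = i ∨ c v = j → v ∈ R) :
    ∃ c' : G.Coloring α, ∀ v, c' v = if v ∈ R then Equiv.swap i j (c v) else c v := by
  refine ⟨Coloring.mk (fun v => if v ∈ R then Equiv.swap i j (c v) else c v) ?_, fun _ => rfl⟩
  have cross : ∀ ⦃u v⦄, G.Adj u v → u ∈ R → v ∉ R → Equiv.swap i j (c u) ≠ c v := by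
    intro u v huv hu hv h
    have hvi : c v ≠ i := fun h' => hv (hR huv hu (Or.inl h'))
    have hvj : c v ≠ j := fun h' => hv (hR huv hu (Or.inr h'))
    rw [← Equiv.swap_apply_of_ne_of_ne hvi hvj] at h
    exact c.valid huv (Equiv.injective _ h)
  intro u v huv
  by_cases hu : u ∈ R <;> by_cases hv : v ∈ R <;> simp only [hu, hv, if_true, if_false]
  · exact fun h => c.valid huv (Equiv.injective _ h)
  · exact cross huv hu hv
  · exact fun h => cross huv.symm hv hu h.symm
  · exact c.valid huv

theorem Coloring.connected_induce_of_forall_coloring_iff (c : G.Coloring α)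
    (hc : Function.Surjective c) (huniq : ∀ c' : G.Coloring α, ∀ u v, c' u = c' v ↔ c u = c v)
    {i j : α} (hij : i ≠ j) : (G.induce {v | c v ∈ s(i, j)}).Connected := by
  classical
  set S : Set V := {v | c v ∈ s(i, j)}
  obtain ⟨v₀, hv₀⟩ := hc i
  refine (connected_iff _).mpr ⟨fun x y => ?_, ⟨⟨v₀, by simp [S, hv₀]⟩⟩⟩
  by_contra hxy
  let R : Set V := {v | ∃ h : v ∈ S, (G.induce S).Reachable x ⟨v, h⟩}
  obtain ⟨c', hc'⟩ := c.exists_swap_on i j R fun u v huv ⟨_, hxu⟩ hv =>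
    ⟨by simpa [S] using hv, hxu.trans (Adj.reachable (by simpa using huv))⟩
  have hxR : (x : V) ∈ R := ⟨x.2, .rfl⟩
  have hyR : (y : V) ∉ R := fun ⟨_, h⟩ => hxy h
  have h := huniq c' x y
  rw [hc', hc', if_pos hxR, if_neg hyR] at h
  rcases Sym2.mem_iff.mp x.2 with hx | hx <;> rcases Sym2.mem_iff.mp y.2 with hy | hy <;>
    simp [hx, hy, hij, hij.symm] at h

lemma Coloring.card_edgeSet_induce_le [Fintype V] (c : G.Coloring α) (q : Sym2 α)
    [Fintype G.edgeSet] :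
    Nat.card (G.induce {v | c v ∈ q}).edgeSet ≤ #{e ∈ G.edgeFinset | e.map c = q} := by
  classical
  rw [Nat.card_eq_fintype_card, ← edgeFinset_card]
  refine card_le_card_of_injOn (Sym2.map Subtype.val) (fun e he => ?_)
    (Sym2.map.injective Subtype.val_injective).injOn
  induction e using Sym2.ind with
  | _ a b =>
    have hab : G.Adj a b := by simpa using he
    simpa [hab] using ((Sym2.mem_and_mem_iff (c.valid hab)).mp ⟨a.2, b.2⟩).symm

variable [Fintype α]

lemma Coloring.card_edgeFinset_eq_sum_card_filter_map_eq (c : G.Coloring α) [Fintype G.edgeSet] :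
    #G.edgeFinset =
      ∑ q ∈ (⊤ : SimpleGraph α).edgeFinset, #{e ∈ G.edgeFinset | e.map c = q} :=
  card_eq_sum_card_fiberwise fun e he => by
    simpa using c.map_mem_edgeSet (mem_edgeFinset.mp he)

lemma sum_edgeFinset_top_card_filter_mem [Fintype V] (f : V → α) :
    ∑ q ∈ (⊤ : SimpleGraph α).edgeFinset, #{v | f v ∈ q} =
      Fintype.card V * (Fintype.card α - 1) := by
  have h := sum_card_bipartiteAbove_eq_sum_card_bipartiteBelow
    (s := (⊤ : SimpleGraph α).edgeFinset) (t := univ) (r := fun q v => f v ∈ q)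
  simp only [bipartiteAbove, bipartiteBelow, ← incidenceFinset_eq_filter,
    card_incidenceFinset_eq_degree, complete_graph_degree] at h
  rw [h, sum_const, card_univ, smul_eq_mul]

theorem Coloring.card_filter_mem_le_card_filter_map_eq_add_one [Fintype V] (c : G.Coloring α)
    (hc : Function.Surjective c) (huniq : ∀ c' : G.Coloring α, ∀ u v, c' u = c' v ↔ c u = c v)
    [Fintype G.edgeSet] {q : Sym2 α} (hq : q ∈ (⊤ : SimpleGraph α).edgeFinset) :
    #{v | c v ∈ q} ≤ #{e ∈ G.edgeFinset | e.map c = q} + 1 := by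
  induction q using Sym2.ind with
  | _ i j =>
    have hconn := c.connected_induce_of_forall_coloring_iff hc huniq (by simpa using hq)
    calc #{v | c v ∈ s(i, j)} = Nat.card {v | c v ∈ s(i, j)} := by
          rw [Nat.card_eq_fintype_card, Fintype.card_ofFinset]
          simp only [Sym2.mem_iff, Set.mem_ofPred_eq]
      _ ≤ Nat.card (G.induce {v | c v ∈ s(i, j)}).edgeSet + 1 :=
          hconn.card_vert_le_card_edgeSet_add_one
      _ ≤ #{e ∈ G.edgeFinset | e.map c = s(i, j)} + 1 := by
          gcongr
          exact c.card_edgeSet_induce_le _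

end SimpleGraph

theorem UniquelyKColorable.sub_one_mul_card_le_ncard_edgeSet_add_choose {V : Type} [Fintype V]
    {G : SimpleGraph V} {k : ℕ} (hG : UniquelyKColorable G k) :
    (k - 1) * Fintype.card V ≤ G.edgeSet.ncard + k.choose 2 := by
  classical
  have hcol : G.Colorable k := chromaticNumber_le_iff_colorable.mp hG.1.le
  have hsurj := (chromaticNumber_eq_iff_forall_surjective hcol).mp hG.1
  obtain ⟨c⟩ := hcol
  have huniq : ∀ c' : G.Coloring (Fin k), ∀ u v, c' u = c' v ↔ c u = c v := fun c' => hG.2 c' c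
  calc (k - 1) * Fintype.card V
      = ∑ q ∈ (⊤ : SimpleGraph (Fin k)).edgeFinset, #{v | c v ∈ q} := by
        rw [sum_edgeFinset_top_card_filter_mem, Fintype.card_fin, mul_comm]
    _ ≤ ∑ q ∈ (⊤ : SimpleGraph (Fin k)).edgeFinset, (#{e ∈ G.edgeFinset | e.map c = q} + 1) :=
        sum_le_sum fun q hq => c.card_filter_mem_le_card_filter_map_eq_add_one (hsurj c) huniq hq
    _ = G.edgeSet.ncard + k.choose 2 := by
        rw [sum_add_distrib, ← c.card_edgeFinset_eq_sum_card_filter_map_eq, sum_const,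
          card_edgeFinset_top_eq_card_choose_two, Fintype.card_fin, smul_eq_mul, mul_one,
          ← coe_edgeFinset, Set.ncard_coe_finset]

/-- A uniquely `k`-colorable graph with exactly `(k-1)|V| - k(k-1)/2` edges is
edge-critical. -/
theorem stmt_2 {V : Type} [Fintype V] (G : SimpleGraph V) (k : ℕ)
    (hG : UniquelyKColorable G k)
    (hsize : (G.edgeSet.ncard : ℤ) =
      ((k : ℤ) - 1) * (Fintype.card V : ℤ) - (k : ℤ) * ((k : ℤ) - 1) / 2) :
    EdgeCritical G k := by
  refine ⟨hG, fun e he hGe => ?_⟩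
  have hbound := hGe.sub_one_mul_card_le_ncard_edgeSet_add_choose
  have hdel : (G.deleteEdges {e}).edgeSet.ncard + 1 = G.edgeSet.ncard := by
    rw [edgeSet_deleteEdges, Set.ncard_sdiff_singleton_add_one he]
  rw [Nat.choose_two_right] at hbound
  -- splitting off `k = 0` lets the truncated `k - 1 : ℕ` of the bound be cast to `(k : ℤ) - 1`
  rcases k with _ | m <;> push_cast [add_sub_cancel_right] at hsize <;>
    zify [Nat.add_sub_cancel] at hbound <;> omega
end

section
/- An edge-critical uniquely 2-colorable graph is a tree, and hence has exactly |V(G)| - 1 edges. -/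
open SimpleGraph

/-!
Permuting the colors on a single component of a graph gives a new coloring, so a uniquely
`k`-colorable graph with `k ≥ 2` is connected. Along a walk the two colors of a 2-coloring
alternate, so in a connected graph the color classes are the parity classes of distances and
the 2-coloring is unique. Hence if an edge `e` of an edge-critical `G` lay on a cycle, `G - e`
would still be connected, still contain an edge, and so still be uniquely 2-colorable.
-/

namespace SimpleGraph

variable {V : Type} {α : Type*} {G : SimpleGraph V}

open Classical in
noncomputable def Coloring.permuteOn (c : G.Coloring α) (σ : Equiv.Perm α)
    (C : G.ConnectedComponent) : G.Coloring α :=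
  Coloring.mk (fun x => if G.connectedComponentMk x = C then σ (c x) else c x) fun {x y} hxy => by
    rw [(ConnectedComponent.connectedComponentMk_eq_of_adj hxy).symm]
    split_ifs
    · exact σ.injective.ne (c.valid hxy)
    · exact c.valid hxy

theorem Coloring.eq_iff_even_length (c : G.Coloring (Fin 2)) {u v : V} (p : G.Walk u v) :
    c u = c v ↔ Even p.length := by
  rw [(recolorOfEquiv G finTwoEquiv c).even_length_iff_congr p, ← Bool.eq_iff_iff]
  exact finTwoEquiv.injective.eq_iff.symm

theorem Preconnected.coloring_eq_iff_eq (h : G.Preconnected) (c₁ c₂ : G.Coloring (Fin 2))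
    (u v : V) : c₁ u = c₁ v ↔ c₂ u = c₂ v := by
  obtain ⟨p⟩ := h u v
  rw [c₁.eq_iff_even_length p, c₂.eq_iff_even_length p]

theorem Preconnected.uniquelyKColorable_two (h : G.Preconnected) (hχ : G.chromaticNumber = 2) :
    UniquelyKColorable G 2 :=
  ⟨hχ, h.coloring_eq_iff_eq⟩

theorem UniquelyKColorable.connected {k : ℕ} (hG : UniquelyKColorable G k) (hk : 1 < k) :
    G.Connected := by
  have : Nonempty V := by
    by_contra hV
    have h0 := (chromaticNumber_eq_zero_iff (G := G)).mpr (not_nonempty_iff.mp hV)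
    rw [hG.1, Nat.cast_eq_zero] at h0
    omega
  obtain ⟨c⟩ : G.Colorable k := chromaticNumber_le_iff_colorable.mp hG.1.le
  refine (connected_iff G).mpr ⟨fun u v => by_contra fun hnr => ?_, ‹_›⟩
  have hv : G.connectedComponentMk v ≠ G.connectedComponentMk u :=
    fun h => hnr (ConnectedComponent.exact h).symm
  have key (w : Fin k) : c u = c v ↔ w = c v := by
    simpa only [Coloring.permuteOn, Coloring.mk, RelHom.coeFn_mk, if_true, if_neg hv,
      Equiv.swap_apply_left] using
      hG.2 c (c.permuteOn (Equiv.swap (c u) w) (G.connectedComponentMk u)) u v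
  by_cases hc : c u = c v
  · have : Nontrivial (Fin k) := Fin.nontrivial_iff_two_le.mpr hk
    obtain ⟨w, hw⟩ := exists_ne (c u)
    exact hw (((key w).mp hc).trans hc.symm)
  · exact hc ((key (c v)).mpr rfl)

theorem EdgeCritical.isAcyclic (hG : EdgeCritical G 2) : G.IsAcyclic := by
  refine isAcyclic_iff_forall_adj_isBridge.mpr fun v w hvw => by_contra fun hbr => ?_
  have hconn := (hG.1.connected one_lt_two).connected_delete_edge_of_not_isBridge hbr
  have : Nontrivial V := ⟨v, w, hvw.ne⟩
  obtain ⟨_, hadj⟩ := hconn.preconnected.exists_adj_of_nontrivial v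
  refine hG.2 _ hvw (hconn.preconnected.uniquelyKColorable_two (le_antisymm ?_ ?_))
  · exact (chromaticNumber_mono _ (deleteEdges_le _)).trans_eq hG.1.1
  · exact two_le_chromaticNumber_of_adj hadj

end SimpleGraph

/-- An edge-critical uniquely 2-colorable graph is a tree, hence has `|V| - 1` edges. -/
theorem stmt_3 {V : Type} [Fintype V] (G : SimpleGraph V)
    (hG : EdgeCritical G 2) :
    G.IsTree ∧ G.edgeSet.ncard = Fintype.card V - 1 := by
  have hT : G.IsTree := ⟨hG.1.connected one_lt_two, hG.isAcyclic⟩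
  have hcard := (isTree_iff_connected_and_card.mp hT).2
  rw [Nat.card_coe_set_eq, Nat.card_eq_fintype_card] at hcard
  exact ⟨hT, by omega⟩
end

section
/- Let G be an edge-critical uniquely 3-colorable graph and let v be a vertex of G of odd degree at least 3, whose cyclic sequence of incident faces (in a planar embedding) consists of exactly one 4-face with all other incident faces triangles. Then no such vertex exists; equivalently, any vertex of G incident with exactly one 4-face and otherwise only 3-faces has even degree. -/
open SimpleGraph

/-
Delete the edge `u n₀` of the 4-face. In any 3-coloring of the smaller graph the path
`n₀ n₁ ⋯ n_{d-1}` avoids the color of the hub `v`, so it alternates between two colors;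
for odd `d` its ends `n₀` and `n_{d-1}` get the same color, and `u`, adjacent to `n_{d-1}`,
gets a different one. So every 3-coloring of `G - u n₀` is still a 3-coloring of `G`, and
`G - u n₀` stays uniquely 3-colorable, against edge-criticality.
-/

variable {V : Type}

lemma SimpleGraph.deleteEdges_singleton_adj_of_ne {G : SimpleGraph V} {a b x y : V}
    (hab : G.Adj a b) (hbx : b ≠ x) (hby : b ≠ y) : (G.deleteEdges {s(x, y)}).Adj a b := by
  rw [deleteEdges_adj, Set.mem_singleton_iff]
  refine ⟨hab, fun h => ?_⟩
  rcases Sym2.mem_iff.mp (h ▸ Sym2.mem_mk_right a b) with rfl | rfl <;> contradiction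

lemma SimpleGraph.Coloring.ne_of_adj_of_deleteEdges_singleton {G : SimpleGraph V} {α : Type*}
    {x y : V} (c : (G.deleteEdges {s(x, y)}).Coloring α) (hxy : c x ≠ c y) ⦃a b : V⦄
    (hab : G.Adj a b) : c a ≠ c b := by
  by_cases h : s(a, b) = s(x, y)
  · rcases Sym2.eq_iff.mp h with ⟨rfl, rfl⟩ | ⟨rfl, rfl⟩
    exacts [hxy, hxy.symm]
  · exact c.valid ((deleteEdges_adj ..).mpr ⟨hab, h⟩)

lemma UniquelyKColorable.of_le {G H : SimpleGraph V} {k : ℕ} (hG : UniquelyKColorable G k)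
    (hHG : H ≤ G) (hlift : ∀ c : H.Coloring (Fin k), ∀ ⦃a b⦄, G.Adj a b → c a ≠ c b) :
    UniquelyKColorable H k := by
  have hGk : G.Colorable k := chromaticNumber_le_iff_colorable.mp hG.1.le
  have hcol : ∀ j, H.Colorable j → G.Colorable j := by
    rintro j ⟨c⟩
    rcases le_or_gt k j with hkj | hjk
    · exact hGk.mono hkj
    · let c' : H.Coloring (Fin k) :=
        Coloring.mk (Fin.castLE hjk.le ∘ c) fun hab h => c.valid hab (Fin.castLE_injective _ h)
      exact ⟨Coloring.mk c fun hab h => hlift c' hab (congrArg (Fin.castLE hjk.le) h)⟩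
  refine ⟨le_antisymm ?_ ?_, fun c₁ c₂ =>
    hG.2 (Coloring.mk c₁ (hlift c₁ ·)) (Coloring.mk c₂ (hlift c₂ ·))⟩
  · exact hG.1 ▸ chromaticNumber_mono G hHG
  · exact hG.1 ▸ chromaticNumber_le_of_forall_imp hcol

lemma Fin.three_eq_of_ne_of_ne : ∀ a x y z : Fin 3,
    x ≠ a → y ≠ a → z ≠ a → y ≠ x → z ≠ y → z = x := by
  decide

lemma SimpleGraph.Coloring.fan_eq_iff_even {G : SimpleGraph V} (c : G.Coloring (Fin 3))
    {v : V} {d : ℕ} {w : Fin d → V} (hhub : ∀ i, G.Adj v (w i))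
    (hpath : ∀ i j : Fin d, (j : ℕ) = i + 1 → G.Adj (w i) (w j)) (hd : 0 < d) :
    ∀ k (hk : k < d), c (w ⟨k, hk⟩) = c (w ⟨0, hd⟩) ↔ Even k := by
  intro k
  induction k with
  | zero => simp
  | succ k ih =>
    intro hk
    have hstep := c.valid (hpath ⟨k, by omega⟩ ⟨k + 1, hk⟩ rfl)
    rw [Nat.even_add_one, ← ih (by omega)]
    constructor
    · intro h0 hk0
      exact hstep (hk0.trans h0.symm)
    · intro hk0
      exact Fin.three_eq_of_ne_of_ne (c v) _ _ _ (c.valid (hhub _)).symm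
        (c.valid (hhub _)).symm (c.valid (hhub _)).symm hk0 hstep.symm

/-- The neighbors of `v` in rotation order are `n 0, …, n (d-1)`; consecutive ones are adjacent
(triangular faces) and `v, n 0, u, n (d-1)` bounds the 4-face. -/
theorem stmt_5 {V : Type} (G : SimpleGraph V) (hG : EdgeCritical G 3)
    (v : V) (d : ℕ) (hd : 3 ≤ d) (n : Fin d → V) (hinj : Function.Injective n)
    (hnbr : ∀ i, G.Adj v (n i))
    (hcons : ∀ i j : Fin d, (j : ℕ) = (i : ℕ) + 1 → G.Adj (n i) (n j))
    (u : V) (hu : ¬ G.Adj v u) (huv : u ≠ v)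
    (hu0 : G.Adj u (n ⟨0, by omega⟩)) (hud : G.Adj u (n ⟨d - 1, by omega⟩)) :
    Even d := by
  by_contra hodd
  have hun : ∀ i, n i ≠ u := fun i h => hu (h ▸ hnbr i)
  have hn0 : ∀ i : Fin d, (i : ℕ) ≠ 0 → n i ≠ n ⟨0, by omega⟩ :=
    fun i hi h => hi (congrArg Fin.val (hinj h))
  let H := G.deleteEdges {s(u, n ⟨0, by omega⟩)}
  have hHhub : ∀ i, H.Adj v (n i) := fun i =>
    (deleteEdges_singleton_adj_of_ne (hnbr i).symm huv.symm (hnbr _).ne).symm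
  have hHpath : ∀ i j : Fin d, (j : ℕ) = i + 1 → H.Adj (n i) (n j) := fun i j hij =>
    deleteEdges_singleton_adj_of_ne (hcons i j hij) (hun j) (hn0 j (by omega))
  have hHu : H.Adj u (n ⟨d - 1, by omega⟩) :=
    deleteEdges_singleton_adj_of_ne hud (hun _) (hn0 _ (by simp only; omega))
  have hsep : ∀ c : H.Coloring (Fin 3), c u ≠ c (n ⟨0, by omega⟩) := by
    intro c
    have hends := (c.fan_eq_iff_even hHhub hHpath (by omega) (d - 1) (by omega)).mpr
      (by rcases Nat.not_even_iff_odd.mp hodd with ⟨m, rfl⟩; exact ⟨m, by omega⟩)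
    exact hends ▸ c.valid hHu
  exact hG.2 _ hu0 <|
    hG.1.of_le (deleteEdges_le _) fun c => c.ne_of_adj_of_deleteEdges_singleton (hsep c)
end

section
/- Let G be an edge-critical uniquely 3-colorable graph and let G₀ be a subgraph of G which is itself uniquely 3-colorable. Then G₀ is edge-critical. -/
open SimpleGraph

/-- A uniquely 3-colorable subgraph of an edge-critical uniquely 3-colorable graph is
itself edge-critical. -/
theorem stmt_7 {V : Type} (G : SimpleGraph V) (hG : EdgeCritical G 3)
    (G₀ : G.Subgraph) (h₀ : UniquelyKColorable G₀.coe 3) :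
    EdgeCritical G₀.coe 3 := by
  refine ⟨h₀, ?_⟩
  intro e he hdel
  induction e using Sym2.ind with
  | _ u v =>
  have huv : G₀.coe.Adj u v := he
  have huvG : G.Adj (u : V) (v : V) := G₀.coe_adj_sub u v huv
  have hne : s(u, v) ∈ ({s(u, v)} : Set (Sym2 ↥G₀.verts)) := rfl
  -- the corresponding edge in G
  set e' : Sym2 V := s((u : V), (v : V)) with he'def
  have he' : e' ∈ G.edgeSet := huvG
  -- key: edges of the coe-deleted graph map into edges of the G-deleted graph
  have emb : ∀ {x y : ↥G₀.verts}, ((G₀.coe.deleteEdges {s(u, v)}).Adj x y) →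
      (G.deleteEdges {e'}).Adj (x : V) (y : V) := by
    intro x y hxy
    rw [SimpleGraph.deleteEdges_adj] at hxy ⊢
    refine ⟨G₀.coe_adj_sub x y hxy.1, ?_⟩
    intro hmem
    apply hxy.2
    have : s((x : V), (y : V)) = s((u : V), (v : V)) := hmem
    rcases Sym2.eq_iff.mp this with ⟨h1, h2⟩ | ⟨h1, h2⟩
    · simp [Subtype.ext h1, Subtype.ext h2]
    · rw [Subtype.ext h1, Subtype.ext h2]
      exact Sym2.eq_swap ▸ rfl
  -- restriction of a coloring of G.deleteEdges {e'} to G₀.coe.deleteEdges {s(u,v)}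
  have restrict : ∀ C : (G.deleteEdges {e'}).Coloring (Fin 3),
      ∃ d : (G₀.coe.deleteEdges {s(u, v)}).Coloring (Fin 3),
        ∀ x : ↥G₀.verts, d x = C (x : V) := by
    intro C
    exact ⟨SimpleGraph.Coloring.mk (fun x => C (x : V))
      (fun hxy => C.valid (emb hxy)), fun _ => rfl⟩
  -- a coloring of G₀.coe, which exists since χ(G₀.coe) = 3
  have hc₀ : G₀.coe.Colorable 3 := by
    rw [← SimpleGraph.chromaticNumber_le_iff_colorable, h₀.1]
  obtain ⟨c₀⟩ := hc₀
  -- c₀ as coloring of the deleted subgraph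
  let c₀' : (G₀.coe.deleteEdges {s(u, v)}).Coloring (Fin 3) :=
    SimpleGraph.Coloring.mk (fun x => c₀ x)
      (fun hxy => c₀.valid (SimpleGraph.deleteEdges_adj.mp hxy).1)
  -- key separation: every coloring of G.deleteEdges {e'} separates u and v
  have key : ∀ C : (G.deleteEdges {e'}).Coloring (Fin 3), C (u : V) ≠ C (v : V) := by
    intro C hCuv
    obtain ⟨d, hd⟩ := restrict C
    have hiff := hdel.2 c₀' d u v
    have : c₀ u = c₀ v := hiff.mpr (by rw [hd, hd, hCuv])
    exact c₀.valid huv this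
  -- lift colorings of G.deleteEdges {e'} to colorings of G (same function)
  have lift : ∀ C : (G.deleteEdges {e'}).Coloring (Fin 3),
      ∃ D : G.Coloring (Fin 3), ∀ x : V, D x = C x := by
    intro C
    refine ⟨SimpleGraph.Coloring.mk (fun x => C x) ?_, fun _ => rfl⟩
    intro a b hab hCab
    by_cases hmem : s(a, b) = e'
    · rcases Sym2.eq_iff.mp hmem with ⟨h1, h2⟩ | ⟨h1, h2⟩
      · exact key C (h1 ▸ h2 ▸ hCab)
      · exact key C (h1 ▸ h2 ▸ hCab.symm)
    · exact C.valid (SimpleGraph.deleteEdges_adj.mpr ⟨hab, hmem⟩) hCab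
  -- G.deleteEdges {e'} is uniquely 3-colorable: contradiction with edge-criticality
  apply hG.2 e' he'
  constructor
  · apply le_antisymm
    · rw [SimpleGraph.chromaticNumber_le_iff_colorable]
      have hG3 : G.Colorable 3 := by
        rw [← SimpleGraph.chromaticNumber_le_iff_colorable, hG.1.1]
      exact hG3.mono_left (SimpleGraph.deleteEdges_le _)
    · have hmono : (G₀.coe.deleteEdges {s(u, v)}).chromaticNumber ≤
          (G.deleteEdges {e'}).chromaticNumber := by
        apply SimpleGraph.chromaticNumber_le_of_forall_imp
        intro n ⟨C⟩
        exact ⟨SimpleGraph.Coloring.mk (fun x => C (x : V))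
          (fun hxy => C.valid (emb hxy))⟩
      rw [hdel.1] at hmono
      exact hmono
  · intro C₁ C₂ a b
    obtain ⟨D₁, hD₁⟩ := lift C₁
    obtain ⟨D₂, hD₂⟩ := lift C₂
    have := hG.1.2 D₁ D₂ a b
    rw [hD₁, hD₁, hD₂, hD₂] at this
    exact this
end

section
/- Let G be an edge-critical uniquely 3-colorable graph and let G₀ be a uniquely 3-colorable subgraph of G. Then every vertex v ∈ V(G) \ V(G₀) has at most 2 neighbors in V(G₀). -/
open SimpleGraph

/-- If `G₀` is a uniquely 3-colorable subgraph of an edge-critical uniquely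
3-colorable graph `G`, then every vertex outside `G₀` has at most 2 neighbors in `G₀`. -/
theorem stmt_8 {V : Type} (G : SimpleGraph V) (hG : EdgeCritical G 3)
    (G₀ : G.Subgraph) (h₀ : UniquelyKColorable G₀.coe 3)
    (v : V) (hv : v ∉ G₀.verts) :
    {u : V | u ∈ G₀.verts ∧ G.Adj v u}.ncard ≤ 2 := by
  classical
  by_contra hcon
  push_neg at hcon
  set S := {u : V | u ∈ G₀.verts ∧ G.Adj v u} with hS
  have hSfin : S.Finite := by
    by_contra hinf
    rw [Set.Infinite.ncard hinf] at hcon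
    omega
  -- a coloring of G
  have hχ : G.chromaticNumber = 3 := hG.1.1
  have hcol3 : G.Colorable 3 := by
    rw [← chromaticNumber_le_iff_colorable]
    exact le_of_eq hχ
  obtain ⟨cG⟩ := hcol3
  -- two neighbors with same color
  have hpigeon : ∃ a ∈ S, ∃ b ∈ S, a ≠ b ∧ cG a = cG b := by
    have hmap : ∀ u ∈ hSfin.toFinset, cG u ∈ ({cG v}ᶜ : Finset (Fin 3)) := by
      intro u hu
      rw [Set.Finite.mem_toFinset] at hu
      simp only [Finset.mem_compl, Finset.mem_singleton]
      exact fun h => (cG.valid hu.2 h.symm).elim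
    have hcard : ({cG v}ᶜ : Finset (Fin 3)).card < hSfin.toFinset.card := by
      rw [Finset.card_compl, Finset.card_singleton]
      have : hSfin.toFinset.card = S.ncard := (Set.ncard_eq_toFinset_card S hSfin).symm
      simp only [Fintype.card_fin]
      omega
    obtain ⟨a, ha, b, hb, hab, heq⟩ :=
      Finset.exists_ne_map_eq_of_card_lt_of_maps_to hcard hmap
    exact ⟨a, hSfin.mem_toFinset.mp ha, b, hSfin.mem_toFinset.mp hb, hab, heq⟩
  obtain ⟨u₁, hu₁, u₂, hu₂, hne, hsame⟩ := hpigeon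
  set e : Sym2 V := s(v, u₁) with he
  have heE : e ∈ G.edgeSet := hu₁.2
  apply hG.2 e heE
  set G' := G.deleteEdges {e} with hG'
  -- key: every Fin 3 coloring of G' is a valid coloring of G
  have key : ∀ c : G'.Coloring (Fin 3), ∀ {x y : V}, G.Adj x y → c x ≠ c y := by
    intro c x y hxy
    by_cases hxe : s(x, y) = e
    · -- edge is e: x,y is v,u₁ in some order; show c v ≠ c u₁
      -- c restricted to G₀ is a coloring of G₀.coe
      have hrestr : ∀ {p q : G₀.verts}, G₀.coe.Adj p q → c p.1 ≠ c q.1 := by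
        intro p q hpq
        apply c.valid
        rw [hG', deleteEdges_adj]
        refine ⟨G₀.adj_sub hpq, ?_⟩
        simp only [Set.mem_singleton_iff]
        intro habs
        rw [he] at habs
        rw [Sym2.eq_iff] at habs
        rcases habs with ⟨h1, _⟩ | ⟨h1, h2⟩
        · exact hv (h1 ▸ p.2)
        · exact hv (h2 ▸ q.2)
      have hrestrG : ∀ {p q : G₀.verts}, G₀.coe.Adj p q → cG p.1 ≠ cG q.1 := by
        intro p q hpq
        exact cG.valid (G₀.adj_sub hpq)
      let c₀ : G₀.coe.Coloring (Fin 3) := Coloring.mk (fun p => c p.1) hrestr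
      let d₀ : G₀.coe.Coloring (Fin 3) := Coloring.mk (fun p => cG p.1) hrestrG
      have hsame' : c u₁ = c u₂ := by
        have := (h₀.2 d₀ c₀ ⟨u₁, hu₁.1⟩ ⟨u₂, hu₂.1⟩).mp hsame
        exact this
      have hvu₂ : G'.Adj v u₂ := by
        rw [hG', deleteEdges_adj]
        refine ⟨hu₂.2, ?_⟩
        intro habs
        rw [Set.mem_singleton_iff, he, Sym2.eq_iff] at habs
        rcases habs with ⟨_, h2⟩ | ⟨h1, _⟩
        · exact hne h2.symm
        · exact (G.ne_of_adj hu₁.2) h1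
      have hcvu₁ : c v ≠ c u₁ := fun h => c.valid hvu₂ (h.trans hsame')
      rw [he, Sym2.eq_iff] at hxe
      rcases hxe with ⟨h1, h2⟩ | ⟨h1, h2⟩
      · rw [h1, h2]; exact hcvu₁
      · rw [h1, h2]; exact fun h => hcvu₁ h.symm
    · exact c.valid (by rw [hG', deleteEdges_adj]; exact ⟨hxy, by simpa using hxe⟩)
  -- now show G' is uniquely 3-colorable
  refine ⟨?_, ?_⟩
  · -- chromatic number
    apply le_antisymm
    · exact le_trans (SimpleGraph.chromaticNumber_mono (G := G') G (G.deleteEdges_le {e})) (le_of_eq hχ)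
    · by_contra hlt
      push_neg at hlt
      have h2 : G'.Colorable 2 := by
        rw [← chromaticNumber_le_iff_colorable]
        exact Order.le_of_lt_add_one (by exact_mod_cast hlt)
      obtain ⟨c2⟩ := h2
      -- lift to Fin 3 coloring of G', which is valid for G, hence G.Colorable 2
      let c3 : G'.Coloring (Fin 3) := Coloring.mk (fun x => Fin.castLE (by norm_num) (c2 x))
        (fun h => by intro habs; exact c2.valid h (Fin.castLE_injective _ habs))
      have : G.Colorable 2 := ⟨Coloring.mk c2 (fun {x y} hxy habs => key c3 hxy (by
        simp only [c3, Coloring.mk]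
        exact congrArg (Fin.castLE (by norm_num)) habs))⟩
      have := this.chromaticNumber_le
      rw [hχ] at this
      norm_num at this
  · intro c₁ c₂ x y
    let C₁ : G.Coloring (Fin 3) := Coloring.mk c₁ (fun h => key c₁ h)
    let C₂ : G.Coloring (Fin 3) := Coloring.mk c₂ (fun h => key c₂ h)
    exact hG.1.2 C₁ C₂ x y
end

section
/- Let G be an edge-critical uniquely 3-colorable graph without separating 3-cycles, let G₀ be a uniquely 3-colorable subgraph of G, and let H₁ be a maximal triangle-subgraph of G with E(G₀) ∩ E(H₁) = ∅. Then G₀ and H₁ have at most one common vertex. -/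
open SimpleGraph

private lemma fin3_cover : ∀ a b c x : Fin 3, a ≠ b → a ≠ c → b ≠ c →
    x = a ∨ x = b ∨ x = c := by decide

private lemma fin3_third : ∀ a b x y : Fin 3, a ≠ b → x ≠ a → x ≠ b → y ≠ a → y ≠ b →
    x = y := by decide

private lemma fin2_pigeon : ∀ x y z : Fin 2, x ≠ y → x ≠ z → y ≠ z → False := by decide

/-- Rigidity of the union of a prefix of the triangle sequence: any two colorings that are
proper on all triangles with index `< k` induce the same partition there. -/
private lemma prefix_rigid {V : Type} {G : SimpleGraph V} {t : ℕ} {T : Fin (t + 1) → Finset V}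
    (hT : ∀ i, G.IsNClique 3 (T i))
    (hshare : ∀ j : Fin (t + 1), j ≠ 0 →
      ∃ i : Fin (t + 1), i < j ∧ ((T i : Set V) ∩ (T j : Set V)).ncard = 2)
    (f h : V → Fin 3)
    (hf : ∀ i : Fin (t + 1), ∀ x ∈ T i, ∀ y ∈ T i, x ≠ y → f x ≠ f y)
    (k : ℕ)
    (hh : ∀ i : Fin (t + 1), i.val < k → ∀ x ∈ T i, ∀ y ∈ T i, x ≠ y → h x ≠ h y) :
    ∀ (i j : Fin (t + 1)), i.val < k → j.val < k → ∀ w ∈ T i, ∀ w' ∈ T j,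
      (h w = h w' ↔ f w = f w') := by
  classical
  intro i j hik hjk w hw w' hw'
  have hk0 : 0 < k := Nat.lt_of_le_of_lt (Nat.zero_le _) hik
  obtain ⟨p₀, p₁, p₂, h01, h02, h12, hT0⟩ := Finset.card_eq_three.mp (hT 0).card_eq
  have hp₀ : p₀ ∈ T 0 := by rw [hT0]; exact Finset.mem_insert_self _ _
  have hp₁ : p₁ ∈ T 0 := by
    rw [hT0]; exact Finset.mem_insert_of_mem (Finset.mem_insert_self _ _)
  have hp₂ : p₂ ∈ T 0 := by
    rw [hT0]
    exact Finset.mem_insert_of_mem (Finset.mem_insert_of_mem (Finset.mem_singleton_self _))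
  set ρ : Fin 3 → Fin 3 := fun x => if x = f p₀ then h p₀ else if x = f p₁ then h p₁ else h p₂
    with hρ
  have hf01 : f p₀ ≠ f p₁ := hf 0 _ hp₀ _ hp₁ h01
  have hf02 : f p₀ ≠ f p₂ := hf 0 _ hp₀ _ hp₂ h02
  have hf12 : f p₁ ≠ f p₂ := hf 0 _ hp₁ _ hp₂ h12
  have hh01 : h p₀ ≠ h p₁ := hh 0 hk0 _ hp₀ _ hp₁ h01
  have hh02 : h p₀ ≠ h p₂ := hh 0 hk0 _ hp₀ _ hp₂ h02
  have hh12 : h p₁ ≠ h p₂ := hh 0 hk0 _ hp₁ _ hp₂ h12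
  have hρ0 : ρ (f p₀) = h p₀ := by simp [hρ]
  have hρ1 : ρ (f p₁) = h p₁ := by simp [hρ, hf01.symm, Ne.symm]
  have hρ2 : ρ (f p₂) = h p₂ := by simp [hρ, hf02.symm, hf12.symm, Ne.symm]
  have ρinj : Function.Injective ρ := by
    intro x y hxy
    rcases fin3_cover (f p₀) (f p₁) (f p₂) x hf01 hf02 hf12 with rfl | rfl | rfl <;>
      rcases fin3_cover (f p₀) (f p₁) (f p₂) y hf01 hf02 hf12 with rfl | rfl | rfl <;>
      simp_all [hρ0, hρ1, hρ2]
  have base : ∀ w ∈ T 0, h w = ρ (f w) := by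
    intro w hw
    rw [hT0] at hw
    simp only [Finset.mem_insert, Finset.mem_singleton] at hw
    rcases hw with rfl | rfl | rfl
    · rw [hρ0]
    · rw [hρ1]
    · rw [hρ2]
  have aux : ∀ n : ℕ, ∀ j : Fin (t + 1), j.val ≤ n → j.val < k → ∀ w ∈ T j, h w = ρ (f w) := by
    intro n
    induction n with
    | zero =>
      intro j hj _ w hw
      have hj' : j = 0 := Fin.ext (Nat.le_zero.mp hj)
      subst hj'
      exact base w hw
    | succ n ih =>
      intro j hj hjk w hw
      by_cases hj0 : j = 0
      · subst hj0
        exact base w hw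
      · obtain ⟨i, hij, hcard⟩ := hshare j hj0
        obtain ⟨p, q, hpq, hpqeq⟩ := Set.ncard_eq_two.mp hcard
        have hpmem : p ∈ (T i : Set V) ∩ (T j : Set V) := by rw [hpqeq]; simp
        have hqmem : q ∈ (T i : Set V) ∩ (T j : Set V) := by rw [hpqeq]; simp
        have hpTi : p ∈ T i := hpmem.1
        have hpTj : p ∈ T j := hpmem.2
        have hqTi : q ∈ T i := hqmem.1
        have hqTj : q ∈ T j := hqmem.2
        have hivlt : i.val < j.val := hij
        have hik' : i.val < k := Nat.lt_trans hivlt hjk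
        have hin : i.val ≤ n := by omega
        have hp : h p = ρ (f p) := ih i hin hik' p hpTi
        have hq : h q = ρ (f q) := ih i hin hik' q hqTi
        by_cases hwp : w = p
        · exact hwp ▸ hp
        by_cases hwq : w = q
        · exact hwq ▸ hq
        have hfpq : f p ≠ f q := hf j _ hpTj _ hqTj hpq
        have h1 : h w ≠ h p := hh j hjk _ hw _ hpTj hwp
        have h2 : h w ≠ h q := hh j hjk _ hw _ hqTj hwq
        have h3 : f w ≠ f p := hf j _ hw _ hpTj hwp
        have h4 : f w ≠ f q := hf j _ hw _ hqTj hwq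
        refine fin3_third (h p) (h q) (h w) (ρ (f w)) (fun hc => hfpq (ρinj ?_)) h1 h2
          (fun hc => h3 (ρinj ?_)) (fun hc => h4 (ρinj ?_))
        · rw [← hp, ← hq]; exact hc
        · rw [hp] at hc; exact hc
        · rw [hq] at hc; exact hc
  have hw1 : h w = ρ (f w) := aux i.val i le_rfl hik w hw
  have hw2 : h w' = ρ (f w') := aux j.val j le_rfl hjk w' hw'
  rw [hw1, hw2]
  exact ⟨fun hc => ρinj hc, fun hc => hc ▸ rfl⟩

private lemma crit_coloring {V : Type} {G : SimpleGraph V} (hG : EdgeCritical G 3)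
    (f : G.Coloring (Fin 3)) {e : Sym2 V} (he : e ∈ G.edgeSet)
    (hnc2 : ¬ (G.deleteEdges {e}).Colorable 2) :
    ∃ c' : (G.deleteEdges {e}).Coloring (Fin 3), ∃ p p' : V,
      ¬ (c' p = c' p' ↔ f p = f p') := by
  have hle : (G.deleteEdges {e}) ≤ G := G.deleteEdges_le {e}
  have hcol3 : (G.deleteEdges {e}).Colorable 3 := Colorable.mono_left hle ⟨f⟩
  have h1 : (G.deleteEdges {e}).chromaticNumber ≤ ((3:ℕ):ℕ∞) :=
    chromaticNumber_le_iff_colorable.mpr hcol3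
  have h2 : ¬ ((G.deleteEdges {e}).chromaticNumber ≤ ((2:ℕ):ℕ∞)) :=
    fun hc => hnc2 (chromaticNumber_le_iff_colorable.mp hc)
  have h3 : ((2:ℕ):ℕ∞) < (G.deleteEdges {e}).chromaticNumber := lt_of_not_ge h2
  have h4 : ((2:ℕ):ℕ∞) + 1 ≤ (G.deleteEdges {e}).chromaticNumber :=
    (ENat.add_one_le_iff (by simp)).mpr h3
  have hchrom : (G.deleteEdges {e}).chromaticNumber = ((3:ℕ):ℕ∞) := by
    refine le_antisymm h1 ?_
    have : ((2:ℕ):ℕ∞) + 1 = ((3:ℕ):ℕ∞) := by norm_num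
    rw [← this]; exact h4
  have hcrit := hG.2 e he
  have hnB : ¬ (∀ c₁ c₂ : (G.deleteEdges {e}).Coloring (Fin 3), ∀ u v : V,
      (c₁ u = c₁ v ↔ c₂ u = c₂ v)) := fun hB => hcrit ⟨hchrom, hB⟩
  obtain ⟨c₁, hc₁⟩ := not_forall.mp hnB
  obtain ⟨c₂, hc₂⟩ := not_forall.mp hc₁
  obtain ⟨p, hp⟩ := not_forall.mp hc₂
  obtain ⟨p', hp'⟩ := not_forall.mp hp
  by_cases hall : ∀ a b : V, c₁ a = c₁ b ↔ f a = f b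
  · refine ⟨c₂, p, p', fun hiff => hp' ?_⟩
    exact (hall p p').trans hiff.symm
  · obtain ⟨a, ha⟩ := not_forall.mp hall
    obtain ⟨b, hb⟩ := not_forall.mp ha
    exact ⟨c₁, a, b, hb⟩

private lemma forced_eq {V : Type} {G : SimpleGraph V} (hG : EdgeCritical G 3)
    (f : G.Coloring (Fin 3)) {x y : V} (hxy : G.Adj x y)
    (c' : (G.deleteEdges {s(x, y)}).Coloring (Fin 3)) {p p' : V}
    (hw : ¬ (c' p = c' p' ↔ f p = f p')) : c' x = c' y := by
  by_contra hne
  refine hw (hG.1.2 (Coloring.mk (fun a => c' a) ?_) f p p')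
  intro a b hab
  by_cases h : s(a, b) = s(x, y)
  · rcases Sym2.eq_iff.mp h with ⟨rfl, rfl⟩ | ⟨rfl, rfl⟩
    · exact hne
    · exact fun hc => hne hc.symm
  · exact c'.valid (by rw [SimpleGraph.deleteEdges_adj]; exact ⟨hab, by simpa using h⟩)

private lemma subgraph_pin {V : Type} {G : SimpleGraph V} {G₀ : G.Subgraph}
    (h₀ : UniquelyKColorable G₀.coe 3) {e : Sym2 V} (he₀ : e ∉ G₀.edgeSet)
    (c' : (G.deleteEdges {e}).Coloring (Fin 3)) (f : G.Coloring (Fin 3))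
    {u v : V} (hu : u ∈ G₀.verts) (hv : v ∈ G₀.verts) :
    (c' u = c' v ↔ f u = f v) := by
  have hval : ∀ {a b : G₀.verts}, G₀.coe.Adj a b → (G.deleteEdges {e}).Adj a.1 b.1 := by
    intro a b hab
    rw [SimpleGraph.deleteEdges_adj]
    refine ⟨hab.adj_sub, ?_⟩
    intro hc
    exact he₀ (by rw [← Set.mem_singleton_iff.mp hc]; exact Subgraph.mem_edgeSet.mpr hab)
  exact h₀.2 (Coloring.mk (fun a => c' a.1) (fun hab => c'.valid (hval hab)))
    (Coloring.mk (fun a => f a.1) (fun hab => f.valid hab.adj_sub)) ⟨u, hu⟩ ⟨v, hv⟩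

private lemma no2_of_subgraph {V : Type} {G : SimpleGraph V} {G₀ : G.Subgraph}
    (h₀ : UniquelyKColorable G₀.coe 3) {e : Sym2 V} (he₀ : e ∉ G₀.edgeSet) :
    ¬ (G.deleteEdges {e}).Colorable 2 := by
  rintro ⟨c2⟩
  have hval : ∀ {a b : G₀.verts}, G₀.coe.Adj a b → (G.deleteEdges {e}).Adj a.1 b.1 := by
    intro a b hab
    rw [SimpleGraph.deleteEdges_adj]
    refine ⟨hab.adj_sub, ?_⟩
    intro hc
    exact he₀ (by rw [← Set.mem_singleton_iff.mp hc]; exact Subgraph.mem_edgeSet.mpr hab)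
  have hcol : G₀.coe.Colorable 2 :=
    ⟨Coloring.mk (fun a => c2 a.1) (fun hab => c2.valid (hval hab))⟩
  have h2 : G₀.coe.chromaticNumber ≤ ((2:ℕ):ℕ∞) := chromaticNumber_le_iff_colorable.mpr hcol
  rw [h₀.1] at h2
  norm_num at h2

private lemma no2_of_triangle {V : Type} {G : SimpleGraph V} {a b c : V}
    (hab : G.Adj a b) (hac : G.Adj a c) (hbc : G.Adj b c) {e : Sym2 V}
    (h1 : s(a, b) ≠ e) (h2 : s(a, c) ≠ e) (h3 : s(b, c) ≠ e) :
    ¬ (G.deleteEdges {e}).Colorable 2 := by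
  rintro ⟨c2⟩
  have d1 := c2.valid (show (G.deleteEdges {e}).Adj a b by
    rw [SimpleGraph.deleteEdges_adj]; exact ⟨hab, by simpa using h1⟩)
  have d2 := c2.valid (show (G.deleteEdges {e}).Adj a c by
    rw [SimpleGraph.deleteEdges_adj]; exact ⟨hac, by simpa using h2⟩)
  have d3 := c2.valid (show (G.deleteEdges {e}).Adj b c by
    rw [SimpleGraph.deleteEdges_adj]; exact ⟨hbc, by simpa using h3⟩)
  exact fin2_pigeon _ _ _ d1 d2 d3

private lemma core {V : Type} {G : SimpleGraph V} (hG : EdgeCritical G 3)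
    (f : G.Coloring (Fin 3)) {G₀ H₁ : G.Subgraph} (h₀ : UniquelyKColorable G₀.coe 3)
    (hdisj : G₀.edgeSet ∩ H₁.edgeSet = ∅)
    {t : ℕ} {T : Fin (t + 1) → Finset V}
    (hT : ∀ i, G.IsNClique 3 (T i))
    (hshare : ∀ j : Fin (t + 1), j ≠ 0 →
      ∃ i : Fin (t + 1), i < j ∧ ((T i : Set V) ∩ (T j : Set V)).ncard = 2)
    (hH₁ : H₁ = ⨆ i, (⊤ : G.Subgraph).induce (T i : Set V))
    {a b : V} (ha : a ∈ G₀.verts) (hb : b ∈ G₀.verts) (hab : a ≠ b) (hnadj : ¬ G.Adj a b)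
    {j : Fin (t + 1)} (hbj : b ∈ T j) (hbmin : ∀ i, i < j → b ∉ T i)
    {ia : Fin (t + 1)} (hiaj : ia < j) (haT : a ∈ T ia) : False := by
  classical
  have adjT : ∀ (i : Fin (t + 1)) (x y : V), x ∈ T i → y ∈ T i → x ≠ y → G.Adj x y :=
    fun i x y hx hy hne => (hT i).isClique (Finset.mem_coe.mpr hx) (Finset.mem_coe.mpr hy) hne
  have edgeH : ∀ (i : Fin (t + 1)) (x y : V), x ∈ T i → y ∈ T i → G.Adj x y →
      s(x, y) ∈ H₁.edgeSet := by
    intro i x y hx hy hadj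
    rw [hH₁, Subgraph.mem_edgeSet, Subgraph.iSup_adj]
    refine ⟨i, ?_⟩
    rw [Subgraph.induce_adj]
    exact ⟨Finset.mem_coe.mpr hx, Finset.mem_coe.mpr hy, (Subgraph.top_adj).mpr hadj⟩
  have hj0 : j ≠ 0 := by
    intro h
    subst h
    exact Fin.not_lt_zero ia hiaj
  obtain ⟨i₀, hi₀j, hcard⟩ := hshare j hj0
  obtain ⟨p, q, hpq, hpqeq⟩ := Set.ncard_eq_two.mp hcard
  have hpmem : p ∈ (T i₀ : Set V) ∩ (T j : Set V) := by rw [hpqeq]; simp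
  have hqmem : q ∈ (T i₀ : Set V) ∩ (T j : Set V) := by rw [hpqeq]; simp
  have hpTi : p ∈ T i₀ := Finset.mem_coe.mp hpmem.1
  have hpTj : p ∈ T j := Finset.mem_coe.mp hpmem.2
  have hqTi : q ∈ T i₀ := Finset.mem_coe.mp hqmem.1
  have hqTj : q ∈ T j := Finset.mem_coe.mp hqmem.2
  have hbp : b ≠ p := fun h => hbmin i₀ hi₀j (h ▸ hpTi)
  have hbq : b ≠ q := fun h => hbmin i₀ hi₀j (h ▸ hqTi)
  have haj : a ∉ T j := fun h => hnadj (adjT j a b h hbj hab)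
  have hfpq : f p ≠ f q := f.valid (adjT i₀ p q hpTi hqTi hpq)
  have hfbp : f b ≠ f p := f.valid (adjT j b p hbj hpTj hbp)
  have hfbq : f b ≠ f q := f.valid (adjT j b q hbj hqTj hbq)
  obtain ⟨z, hzTj, hzTi₀, hbz, hcase⟩ :
      ∃ z, z ∈ T j ∧ z ∈ T i₀ ∧ b ≠ z ∧
        ((f a = f b ∧ f a ≠ f z) ∨ (f a ≠ f b ∧ f a = f z)) := by
    by_cases hfab : f a = f b
    · exact ⟨p, hpTj, hpTi, hbp, Or.inl ⟨hfab, by rw [hfab]; exact hfbp⟩⟩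
    · rcases fin3_cover (f b) (f p) (f q) (f a) hfbp hfbq hfpq with h | h | h
      · exact absurd h hfab
      · exact ⟨p, hpTj, hpTi, hbp, Or.inr ⟨hfab, h⟩⟩
      · exact ⟨q, hqTj, hqTi, hbq, Or.inr ⟨hfab, h⟩⟩
  have hadjbz : G.Adj b z := adjT j b z hbj hzTj hbz
  have heH : s(b, z) ∈ H₁.edgeSet := edgeH j b z hbj hzTj hadjbz
  have heG₀ : s(b, z) ∉ G₀.edgeSet := fun hc =>
    (Set.eq_empty_iff_forall_notMem.mp hdisj _) ⟨hc, heH⟩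
  obtain ⟨c', w₁, w₂, hwit⟩ := crit_coloring hG f (G.mem_edgeSet.mpr hadjbz)
    (no2_of_subgraph h₀ heG₀)
  have hforce : c' b = c' z := forced_eq hG f hadjbz c' hwit
  have hrig := prefix_rigid hT hshare (fun x => f x) (fun x => c' x)
    (fun i x hx y hy hne => f.valid (adjT i x y hx hy hne)) j.val
    (by
      intro i hik x hx y hy hne
      have hilt : i < j := hik
      have hnb : b ∉ T i := hbmin i hilt
      refine c'.valid ?_
      rw [SimpleGraph.deleteEdges_adj]
      refine ⟨adjT i x y hx hy hne, ?_⟩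
      intro hc
      have heq : s(x, y) = s(b, z) := Set.mem_singleton_iff.mp hc
      rcases Sym2.eq_iff.mp heq with ⟨rfl, rfl⟩ | ⟨rfl, rfl⟩
      · exact hnb hx
      · exact hnb hy)
  have key1 : c' a = c' z ↔ f a = f z :=
    hrig ia i₀ hiaj hi₀j a haT z hzTi₀
  have key2 : c' a = c' b ↔ f a = f b := subgraph_pin h₀ heG₀ c' f ha hb
  rw [hforce] at key2
  have hfin : f a = f b ↔ f a = f z := key2.symm.trans key1
  rcases hcase with ⟨h1, h2⟩ | ⟨h1, h2⟩
  · exact h2 (hfin.mp h1)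
  · exact h1 (hfin.mpr h2)

/-- (Theorem 3.6(i)) In an edge-critical uniquely 3-colorable graph without
separating 3-cycles, a uniquely 3-colorable subgraph and an edge-disjoint maximal
triangle-subgraph have at most one common vertex. -/
theorem stmt_11 {V : Type} (G : SimpleGraph V) (hG : EdgeCritical G 3)
    (hsep : NoSeparating3Cycle G)
    (G₀ H₁ : G.Subgraph) (h₀ : UniquelyKColorable G₀.coe 3)
    (h₁ : MaximalTriangleSubgraph G H₁)
    (hdisj : G₀.edgeSet ∩ H₁.edgeSet = ∅) :
    (G₀.verts ∩ H₁.verts).Subsingleton := by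
  classical
  obtain ⟨t, T, hT, hshare, hH₁eq⟩ := h₁.1
  have adjT : ∀ (i : Fin (t + 1)) (x y : V), x ∈ T i → y ∈ T i → x ≠ y → G.Adj x y :=
    fun i x y hx hy hne => (hT i).isClique (Finset.mem_coe.mpr hx) (Finset.mem_coe.mpr hy) hne
  have edgeH : ∀ (i : Fin (t + 1)) (x y : V), x ∈ T i → y ∈ T i → G.Adj x y →
      s(x, y) ∈ H₁.edgeSet := by
    intro i x y hx hy hadj
    rw [hH₁eq, Subgraph.mem_edgeSet, Subgraph.iSup_adj]
    refine ⟨i, ?_⟩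
    rw [Subgraph.induce_adj]
    exact ⟨Finset.mem_coe.mpr hx, Finset.mem_coe.mpr hy, (Subgraph.top_adj).mpr hadj⟩
  have vertH : ∀ {x : V}, x ∈ H₁.verts → ∃ i, x ∈ T i := by
    intro x hx
    rw [hH₁eq, Subgraph.verts_iSup, Set.mem_iUnion] at hx
    obtain ⟨i, hmem⟩ := hx
    exact ⟨i, Finset.mem_coe.mp (by simpa using hmem)⟩
  obtain ⟨f⟩ : Nonempty (G.Coloring (Fin 3)) := by
    exact chromaticNumber_le_iff_colorable.mp (le_of_eq hG.1.1)
  intro u hu v hv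
  by_contra hne
  have huG₀ : u ∈ G₀.verts := hu.1
  have hvG₀ : v ∈ G₀.verts := hv.1
  obtain ⟨iu, hiuT⟩ := vertH hu.2
  obtain ⟨iv, hivT⟩ := vertH hv.2
  by_cases hadj : G.Adj u v
  · -- the two shared vertices cannot be adjacent
    by_cases he₀ : s(u, v) ∈ G₀.edgeSet
    · -- the edge uv is in G₀, hence not in H₁; use rigidity of the full triangle sequence
      have heH : s(u, v) ∉ H₁.edgeSet := fun hc =>
        (Set.eq_empty_iff_forall_notMem.mp hdisj _) ⟨he₀, hc⟩
      obtain ⟨p₀, p₁, p₂, h01, h02, h12, hT0⟩ := Finset.card_eq_three.mp (hT 0).card_eq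
      have hp₀ : p₀ ∈ T 0 := by rw [hT0]; exact Finset.mem_insert_self _ _
      have hp₁ : p₁ ∈ T 0 := by
        rw [hT0]; exact Finset.mem_insert_of_mem (Finset.mem_insert_self _ _)
      have hp₂ : p₂ ∈ T 0 := by
        rw [hT0]
        exact Finset.mem_insert_of_mem (Finset.mem_insert_of_mem (Finset.mem_singleton_self _))
      have m1 : s(p₀, p₁) ∈ H₁.edgeSet := edgeH 0 p₀ p₁ hp₀ hp₁ (adjT 0 p₀ p₁ hp₀ hp₁ h01)
      have m2 : s(p₀, p₂) ∈ H₁.edgeSet := edgeH 0 p₀ p₂ hp₀ hp₂ (adjT 0 p₀ p₂ hp₀ hp₂ h02)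
      have m3 : s(p₁, p₂) ∈ H₁.edgeSet := edgeH 0 p₁ p₂ hp₁ hp₂ (adjT 0 p₁ p₂ hp₁ hp₂ h12)
      have hnc2 := no2_of_triangle (e := s(u, v)) (adjT 0 p₀ p₁ hp₀ hp₁ h01)
        (adjT 0 p₀ p₂ hp₀ hp₂ h02) (adjT 0 p₁ p₂ hp₁ hp₂ h12)
        (fun hc => heH (by rw [← hc]; exact m1))
        (fun hc => heH (by rw [← hc]; exact m2))
        (fun hc => heH (by rw [← hc]; exact m3))
      obtain ⟨c', w₁, w₂, hwit⟩ := crit_coloring hG f (G.mem_edgeSet.mpr hadj) hnc2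
      have hforce : c' u = c' v := forced_eq hG f hadj c' hwit
      have hrig := prefix_rigid hT hshare (fun x => f x) (fun x => c' x)
        (fun i x hx y hy hxy => f.valid (adjT i x y hx hy hxy)) (t + 1)
        (by
          intro i _ x hx y hy hxy
          refine c'.valid ?_
          rw [SimpleGraph.deleteEdges_adj]
          refine ⟨adjT i x y hx hy hxy, ?_⟩
          intro hc
          exact heH ((Set.mem_singleton_iff.mp hc) ▸ edgeH i x y hx hy (adjT i x y hx hy hxy)))
      have := hrig iu iv iu.isLt iv.isLt u hiuT v hivT
      exact f.valid hadj (this.mp hforce)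
    · -- the edge uv is not in G₀; use rigidity of G₀
      obtain ⟨c', w₁, w₂, hwit⟩ := crit_coloring hG f (G.mem_edgeSet.mpr hadj)
        (no2_of_subgraph h₀ he₀)
      have hforce : c' u = c' v := forced_eq hG f hadj c' hwit
      have key : c' u = c' v ↔ f u = f v := subgraph_pin h₀ he₀ c' f huG₀ hvG₀
      exact f.valid hadj (key.mp hforce)
  · -- nonadjacent case: use the core lemma at the later of the two first-occurrence indices
    have Pu : ∃ n : ℕ, ∃ i : Fin (t + 1), i.val = n ∧ u ∈ T i := ⟨iu.val, iu, rfl, hiuT⟩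
    have Pv : ∃ n : ℕ, ∃ i : Fin (t + 1), i.val = n ∧ v ∈ T i := ⟨iv.val, iv, rfl, hivT⟩
    obtain ⟨ju, hju, hjuT⟩ := Nat.find_spec Pu
    obtain ⟨jv, hjv, hjvT⟩ := Nat.find_spec Pv
    have hnosame : ∀ i : Fin (t + 1), u ∈ T i → v ∈ T i → False :=
      fun i h1 h2 => hadj (adjT i u v h1 h2 hne)
    have hfindne : Nat.find Pu ≠ Nat.find Pv := by
      intro h
      exact hnosame ju hjuT (Fin.ext (hju.trans (h.trans hjv.symm)) ▸ hjvT)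
    rcases Nat.lt_or_ge (Nat.find Pu) (Nat.find Pv) with hlt | hge
    · refine core hG f h₀ hdisj hT hshare hH₁eq huG₀ hvG₀ hne hadj hjvT ?_ ?_ hjuT
      · intro i hij hvi
        exact Nat.find_min Pv (m := i.val) (by omega) ⟨i, rfl, hvi⟩
      · show ju < jv
        rw [Fin.lt_def, hju, hjv]
        exact hlt
    · have hlt' : Nat.find Pv < Nat.find Pu := lt_of_le_of_ne hge (Ne.symm hfindne)
      refine core hG f h₀ hdisj hT hshare hH₁eq hvG₀ huG₀ (Ne.symm hne)
        (fun hc => hadj hc.symm) hjuT ?_ ?_ hjvT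
      · intro i hij hui
        exact Nat.find_min Pu (m := i.val) (by omega) ⟨i, rfl, hui⟩
      · show jv < ju
        rw [Fin.lt_def, hjv, hju]
        exact hlt'
end

section
/- Let G be an edge-critical uniquely 3-colorable graph without separating 3-cycles, G₀ a uniquely 3-colorable subgraph, and H₁ a maximal triangle-subgraph of G with E(G₀) ∩ E(H₁) = ∅. If G₀ and H₁ share a common vertex v, then there is at most one edge of G between V(G₀) \ {v} and V(H₁) \ {v}; if G₀ and H₁ are vertex-disjoint, then there are at most 3 edges of G between V(G₀) and V(H₁). -/
open SimpleGraph

/-!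
Fix a proper 3-colouring `c` of `G`. Both `G₀` and `H₁` are rigid: any two proper 3-colourings
induce the same partition of their vertices (for `H₁` because each triangle shares an edge with
the part built before it). By edge-criticality every edge `xy` of `G` has a 3-colouring `d` of
`G - xy` with `d x = d y`. If `x ∈ G₀ \ H₁` and `y ∈ H₁ \ G₀`, then `d` is `c` followed by a
permutation `σ` on `G₀` and by `τ` on `H₁`, and `ρ = σ⁻¹ τ` satisfies `ρ (c y') = c x'` for an edge
`x'y'` from `G₀` to `H₁` exactly when `x'y' = xy`.

If `v` is a common vertex, every such `ρ` fixes `c v`, so it is the transposition of the other two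
colours and at most one edge is possible. If `G₀` and `H₁` are disjoint, among four edges two join
the same two colours in opposite directions; their permutations are then the two 3-cycles, and one
of them matches the colours of any third edge. That `G₀` and `H₁` share at most one vertex follows
in the same way: for common vertices `v ≠ w`, stacking the triangles of `H₁` produces an edge `pq`
of `H₁` that every 3-colouring of `H₁ - pq` relating `v` and `w` as `c` does must separate, while
the colouring of `G - pq` merging `p` and `q` relates `v` and `w` as `c` does, being proper on `G₀`.
-/

open Equiv

theorem fin_three_eq_iff_ne_and_ne {a b z x : Fin 3} (hab : a ≠ b) (haz : a ≠ z) (hbz : b ≠ z) :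
    x = z ↔ x ≠ a ∧ x ≠ b := by
  revert a b z x; decide

theorem fin_three_add_eq_add {a b a' b' : Fin 3} (hab : a ≠ b) (hab' : a' ≠ b')
    (h : a + b = a' + b') : a = a' ∧ b = b' ∨ a = b' ∧ b = a' := by
  revert a b a' b'; decide

-- Both permutations are the transposition of the two colours other than `o`.
theorem fin_three_perm_apply_eq_of_fixed {ρ ρ' : Perm (Fin 3)} {o a b a' b' : Fin 3}
    (ho : ρ o = o) (ho' : ρ' o = o) (hab : a ≠ b) (hab' : a' ≠ b') (h : ρ b = a)
    (h' : ρ' b' = a') : ρ b' = a' := by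
  revert ρ ρ' o a b a' b'; decide

-- `ρ` and `ρ'` are the two 3-cycles, and every pair of distinct colours is matched by one of them.
set_option synthInstance.maxSize 2000 in
theorem fin_three_perm_apply_eq_or_apply_eq {ρ ρ' : Perm (Fin 3)} {a b a' b' : Fin 3}
    (hab : a ≠ b) (hab' : a' ≠ b') (h : ρ b = a) (h' : ρ' a = b) (hn : ρ a ≠ b)
    (hn' : ρ' b ≠ a) : ρ b' = a' ∨ ρ' b' = a' := by
  revert ρ ρ' a b a' b'; decide

def SamePartitionOn {V α β : Type*} (f : V → α) (g : V → β) (s : Set V) : Prop :=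
  ∀ ⦃u⦄, u ∈ s → ∀ ⦃w⦄, w ∈ s → (f u = f w ↔ g u = g w)

section SamePartitionOn

variable {V α β : Type*} {f : V → α} {g : V → β} {s : Set V}

protected theorem SamePartitionOn.insert {z : V} (h : SamePartitionOn f g s)
    (hz : ∀ u ∈ s, f u = f z ↔ g u = g z) : SamePartitionOn f g (insert z s) := by
  rintro u (rfl | hu) w (rfl | hw)
  · exact iff_of_true rfl rfl
  · rw [eq_comm, @eq_comm _ (g u)]
    exact hz w hw
  · exact hz u hu
  · exact h hu hw

theorem SamePartitionOn.insert_of_triangle {f g : V → Fin 3} {p q z : V}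
    (h : SamePartitionOn f g s) (hp : p ∈ s) (hq : q ∈ s) (hf : f p ≠ f q ∧ f p ≠ f z ∧ f q ≠ f z)
    (hg : g p ≠ g q ∧ g p ≠ g z ∧ g q ≠ g z) : SamePartitionOn f g (insert z s) := by
  refine h.insert fun u hu => ?_
  rw [fin_three_eq_iff_ne_and_ne hf.1 hf.2.1 hf.2.2, fin_three_eq_iff_ne_and_ne hg.1 hg.2.1 hg.2.2]
  exact and_congr (h hu hp).not (h hu hq).not

theorem SamePartitionOn.exists_perm [Finite α] {f g : V → α} (h : SamePartitionOn f g s) :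
    ∃ σ : Perm α, ∀ u ∈ s, σ (f u) = g u := by
  let P : Set (α × α) := {x | ∃ u ∈ s, x = (f u, g u)}
  have : Finite P := Subtype.finite
  obtain ⟨σ, hσ⟩ := Perm.exists_extending_pair (fun x : P => x.1.1) (fun x : P => x.1.2)
    (by
      rintro ⟨_, u, hu, rfl⟩ ⟨_, w, hw, rfl⟩ (huw : f u = f w)
      simp [huw, (h hu hw).1 huw])
    (by
      rintro ⟨_, u, hu, rfl⟩ ⟨_, w, hw, rfl⟩ (huw : g u = g w)
      simp [huw, (h hu hw).2 huw])
  exact ⟨σ, fun u hu => hσ ⟨_, u, hu, rfl⟩⟩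

theorem SamePartitionOn.exists_perm_glue [Finite α] {f g : V → α} {t : Set V}
    (hs : SamePartitionOn f g s) (ht : SamePartitionOn f g t) :
    ∃ ρ : Perm α, ∀ x ∈ s, ∀ y ∈ t, (g x = g y ↔ ρ (f y) = f x) := by
  obtain ⟨σ, hσ⟩ := hs.exists_perm
  obtain ⟨τ, hτ⟩ := ht.exists_perm
  refine ⟨τ.trans σ.symm, fun x hx y hy => ?_⟩
  rw [← hσ x hx, ← hτ y hy, trans_apply, symm_apply_eq, eq_comm]

end SamePartitionOn

theorem ncard_le_three_of_exists_perm {ι : Type*} {s : Set ι} (a b : ι → Fin 3)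
    (hab : ∀ i ∈ s, a i ≠ b i)
    (hρ : ∀ i ∈ s, ∃ ρ : Perm (Fin 3), ∀ j ∈ s, ρ (b j) = a j ↔ j = i) : s.ncard ≤ 3 := by
  by_contra! hs
  -- `a i + b i` determines the pair `{a i, b i}`, so two indices share their pair of colours.
  obtain ⟨j, hj, k, hk, hjk, hsum⟩ := Set.exists_ne_map_eq_of_ncard_lt_of_maps_to
    (t := Set.univ) (f := fun i => a i + b i) (by simpa using hs) (fun _ _ => trivial)
  obtain ⟨ρ, hρj⟩ := hρ j hj
  obtain ⟨ρ', hρk⟩ := hρ k hk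
  have hkj : ρ (b k) ≠ a k := fun h => hjk ((hρj k hk).1 h).symm
  rcases fin_three_add_eq_add (hab j hj) (hab k hk) hsum with ⟨ha, hb⟩ | ⟨ha, hb⟩
  · rw [← ha, ← hb] at hkj
    exact hkj ((hρj j hj).2 rfl)
  obtain ⟨l, hl, hljk⟩ := Set.exists_mem_notMem_of_ncard_lt_ncard (s := {j, k}) (t := s)
    ((Set.ncard_pair hjk).trans_lt (by omega))
  rw [← hb, ← ha] at hkj
  rcases fin_three_perm_apply_eq_or_apply_eq (hab j hj) (hab l hl) ((hρj j hj).2 rfl)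
    (by rw [ha, hb]; exact (hρk k hk).2 rfl) hkj (fun h => hjk ((hρk j hj).1 h)) with h | h
  · exact hljk (.inl ((hρj l hl).1 h))
  · exact hljk (.inr ((hρk l hl).1 h))

namespace SimpleGraph

variable {V : Type*} {G : SimpleGraph V}

def Coloring.ofDeleteEdges {α : Type*} {x y : V} (d : (G.deleteEdges {s(x, y)}).Coloring α)
    (h : d x ≠ d y) : G.Coloring α :=
  Coloring.mk d fun {a b} hab => by
    by_cases he : s(a, b) = s(x, y)
    · rcases Sym2.eq_iff.1 he with ⟨rfl, rfl⟩ | ⟨rfl, rfl⟩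
      exacts [h, h.symm]
    · exact d.valid (deleteEdges_adj.2 ⟨hab, he⟩)

def Subgraph.IsRigid (H : G.Subgraph) (α : Type*) : Prop :=
  ∀ d₁ d₂ : V → α, (∀ ⦃a b⦄, H.Adj a b → d₁ a ≠ d₁ b) → (∀ ⦃a b⦄, H.Adj a b → d₂ a ≠ d₂ b) →
    SamePartitionOn d₁ d₂ H.verts

theorem Subgraph.IsRigid.samePartitionOn_deleteEdges {α : Type*} {H : G.Subgraph} {e : Sym2 V}
    (hH : H.IsRigid α) (c : G.Coloring α) (d : (G.deleteEdges {e}).Coloring α)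
    (he : e ∉ H.edgeSet) : SamePartitionOn c d H.verts :=
  hH c d (fun _ _ hab => c.valid (H.adj_sub hab)) fun _ _ hab =>
    d.valid (SimpleGraph.deleteEdges_adj.2 ⟨H.adj_sub hab, fun h => he (h ▸ H.mem_edgeSet.2 hab)⟩)

inductive Subgraph.IsTriangleStacked (H : G.Subgraph) : Set V → Prop
  | edge {p q : V} : H.Adj p q → IsTriangleStacked H {p, q}
  | stack {S : Set V} {p q z : V} : IsTriangleStacked H S → p ∈ S → q ∈ S → H.Adj p q →
      H.Adj p z → H.Adj q z → IsTriangleStacked H (insert z S)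

namespace Subgraph.IsTriangleStacked

variable {H : G.Subgraph} {S : Set V}

theorem isRigid (hS : H.IsTriangleStacked S) : (H.induce S).IsRigid (Fin 3) := by
  induction hS with
  | @edge p q hpq =>
    intro d₁ d₂ hd₁ hd₂
    have hqp : (H.induce {p, q}).Adj q p := ⟨.inr rfl, .inl rfl, hpq.symm⟩
    refine SamePartitionOn.insert (s := {q}) (by rintro _ rfl _ rfl; exact iff_of_true rfl rfl) ?_
    rintro _ rfl
    exact iff_of_false (hd₁ hqp) (hd₂ hqp)
  | @stack S p q z _ hp hq hpq hpz hqz ih =>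
    intro d₁ d₂ hd₁ hd₂
    have hS : SamePartitionOn d₁ d₂ S :=
      ih d₁ d₂ (fun _ _ hab => hd₁ ⟨.inr hab.1, .inr hab.2.1, hab.2.2⟩)
        fun _ _ hab => hd₂ ⟨.inr hab.1, .inr hab.2.1, hab.2.2⟩
    have hpq' : (H.induce (insert z S)).Adj p q := ⟨.inr hp, .inr hq, hpq⟩
    have hpz' : (H.induce (insert z S)).Adj p z := ⟨.inr hp, .inl rfl, hpz⟩
    have hqz' : (H.induce (insert z S)).Adj q z := ⟨.inr hq, .inl rfl, hqz⟩
    exact hS.insert_of_triangle hp hq ⟨hd₁ hpq', hd₁ hpz', hd₁ hqz'⟩ ⟨hd₂ hpq', hd₂ hpz', hd₂ hqz'⟩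

theorem union_triangle (hS : H.IsTriangleStacked S) {T : Finset V} (hT : T.card = 3)
    (hTH : ∀ a ∈ T, ∀ b ∈ T, a ≠ b → H.Adj a b) {p q : V} (hpS : p ∈ S) (hqS : q ∈ S)
    (hpT : p ∈ T) (hqT : q ∈ T) (hpq : p ≠ q) : H.IsTriangleStacked (S ∪ T) := by
  classical
  have hqT' : q ∈ T.erase p := Finset.mem_erase.2 ⟨hpq.symm, hqT⟩
  obtain ⟨z, hz⟩ := Finset.card_eq_one.1 <| by
    rw [Finset.card_erase_of_mem hqT', Finset.card_erase_of_mem hpT, hT]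
  obtain ⟨hzq, hzp, hzT⟩ : z ≠ q ∧ z ≠ p ∧ z ∈ T := by
    simpa using (hz ▸ Finset.mem_singleton_self z : z ∈ (T.erase p).erase q)
  have hTeq : (T : Set V) = {p, q, z} := by
    rw [← Finset.insert_erase hpT, ← Finset.insert_erase hqT', hz]
    simp
  rw [hTeq, show S ∪ {p, q, z} = insert z S by
    ext v; simp only [Set.mem_union, Set.mem_insert_iff, Set.mem_singleton_iff]; grind]
  exact hS.stack hpS hqS (hTH p hpT q hqT hpq) (hTH p hpT z hzT hzp.symm) (hTH q hqT z hzT hzq.symm)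

theorem of_triangle {T : Finset V} (hT : T.card = 3)
    (hTH : ∀ a ∈ T, ∀ b ∈ T, a ≠ b → H.Adj a b) : H.IsTriangleStacked T := by
  classical
  obtain ⟨x, y, z, hxy, -, -, rfl⟩ := Finset.card_eq_three.1 hT
  have h := (edge (hTH x (by simp) y (by simp) hxy)).union_triangle hT hTH (by simp) (by simp)
    (by simp) (by simp) hxy
  rwa [Set.union_eq_right.2 (by simp [Set.insert_subset_iff])] at h

theorem exists_adj_forced_of_stack (hS : H.IsTriangleStacked S) {c : V → Fin 3}
    (hc : ∀ ⦃a b⦄, H.Adj a b → c a ≠ c b) {p q z w : V} (hp : p ∈ S) (hq : q ∈ S)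
    (hpq : H.Adj p q) (hpz : H.Adj p z) (hqz : H.Adj q z) (hz : z ∉ S) (hw : w ∈ S) :
    ∃ r, H.Adj z r ∧ ∀ d : V → Fin 3, (∀ ⦃a b⦄, H.Adj a b → s(a, b) ≠ s(z, r) → d a ≠ d b) →
      (d z = d w ↔ c z = c w) → d z ≠ d r := by
  obtain ⟨r, hzr, hr, hcw⟩ : ∃ r, H.Adj z r ∧ r ∈ S ∧ (c w = c r ∨ c w = c z ∧ c w ≠ c r) := by
    by_cases hwq : c w = c q
    · exact ⟨q, hqz.symm, hq, .inl hwq⟩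
    by_cases hwp : c w = c p
    · exact ⟨p, hpz.symm, hp, .inl hwp⟩
    refine ⟨p, hpz.symm, hp, .inr ⟨?_, hwp⟩⟩
    exact (fin_three_eq_iff_ne_and_ne (hc hpq) (hc hpz) (hc hqz)).2 ⟨hwp, hwq⟩
  refine ⟨r, hzr, fun d hd h hdzr => ?_⟩
  have hS' : SamePartitionOn c d S :=
    hS.isRigid c d (fun _ _ hab => hc hab.2.2) fun a b hab => hd hab.2.2 fun hab' => hz <| by
      rcases Sym2.eq_iff.1 hab' with ⟨rfl, -⟩ | ⟨-, rfl⟩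
      exacts [hab.1, hab.2.1]
  rcases hcw with hwr | ⟨hwz, hwr⟩
  · exact hc hzr ((h.1 (hdzr.trans ((hS' hw hr).1 hwr).symm)).trans hwr)
  · exact (hS' hw hr).not.1 hwr ((h.2 hwz.symm).symm.trans hdzr)

theorem exists_adj_forced (hS : H.IsTriangleStacked S) {c : V → Fin 3}
    (hc : ∀ ⦃a b⦄, H.Adj a b → c a ≠ c b) {v w : V} (hv : v ∈ S) (hw : w ∈ S) (hvw : v ≠ w) :
    ∃ p q, H.Adj p q ∧ ∀ d : V → Fin 3, (∀ ⦃a b⦄, H.Adj a b → s(a, b) ≠ s(p, q) → d a ≠ d b) →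
      (d v = d w ↔ c v = c w) → d p ≠ d q := by
  induction hS generalizing v w with
  | @edge p q hpq =>
    have hvw' : H.Adj v w := by
      rcases hv with rfl | rfl <;> rcases hw with rfl | rfl
      exacts [absurd rfl hvw, hpq, hpq.symm, absurd rfl hvw]
    exact ⟨v, w, hvw', fun d _ h => mt h.1 (hc hvw')⟩
  | @stack S p q z hS hp hq hpq hpz hqz ih =>
    by_cases hz : z ∈ S
    · rw [Set.insert_eq_of_mem hz] at hv hw
      exact ih hv hw hvw
    rcases hv with rfl | hv <;> rcases hw with rfl | hw
    · exact absurd rfl hvw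
    · obtain ⟨r, hr, hforced⟩ := hS.exists_adj_forced_of_stack hc hp hq hpq hpz hqz hz hw
      exact ⟨v, r, hr, hforced⟩
    · obtain ⟨r, hr, hforced⟩ := hS.exists_adj_forced_of_stack hc hp hq hpq hpz hqz hz hv
      exact ⟨w, r, hr, fun d hd h => hforced d hd (by rw [eq_comm, h, eq_comm])⟩
    · exact ih hv hw hvw

end Subgraph.IsTriangleStacked

end SimpleGraph

section

variable {V : Type} {G : SimpleGraph V} {H : G.Subgraph}

theorem IsTriangleSubgraph.isTriangleStacked_verts (hH : IsTriangleSubgraph G H) :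
    H.IsTriangleStacked H.verts := by
  obtain ⟨t, T, hT, hchain, rfl⟩ := hH
  have hTH : ∀ i, ∀ a ∈ T i, ∀ b ∈ T i, a ≠ b →
      (⨆ i, (⊤ : G.Subgraph).induce (T i : Set V)).Adj a b :=
    fun i a ha b hb hab => Subgraph.iSup_adj.2 ⟨i, ha, hb, (hT i).1 ha hb hab⟩
  set H := ⨆ i, (⊤ : G.Subgraph).induce (T i : Set V)
  let P (n : ℕ) : Set V := {v | ∃ i : Fin (t + 1), i.val ≤ n ∧ v ∈ T i}
  have hP : ∀ n ≤ t, H.IsTriangleStacked (P n) := by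
    intro n hn
    induction n with
    | zero =>
      rw [show P 0 = T 0 by ext; simp [P]]
      exact .of_triangle (hT 0).2 (hTH 0)
    | succ n ih =>
      let j : Fin (t + 1) := ⟨n + 1, by omega⟩
      obtain ⟨i, hij, hcard⟩ := hchain j (by simp [j, Fin.ext_iff])
      obtain ⟨p, q, hpq, hpqT⟩ := Set.ncard_eq_two.1 hcard
      have hp : p ∈ (T i : Set V) ∩ T j := hpqT ▸ Set.mem_insert p {q}
      have hq : q ∈ (T i : Set V) ∩ T j := hpqT ▸ Set.mem_insert_of_mem p rfl
      have hin : i.val ≤ n := by have : i.val < n + 1 := hij; omega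
      have hPsucc : P (n + 1) = P n ∪ T j := by
        ext v
        constructor
        · rintro ⟨k, hk, hv⟩
          rcases Nat.lt_or_eq_of_le hk with hk | hk
          · exact .inl ⟨k, by omega, hv⟩
          · exact .inr ((Fin.ext hk : k = j) ▸ hv)
        · rintro (⟨k, hk, hv⟩ | hv)
          exacts [⟨k, by omega, hv⟩, ⟨j, le_rfl, hv⟩]
      rw [hPsucc]
      exact (ih (by omega)).union_triangle (hT j).2 (hTH j) ⟨i, hin, hp.1⟩ ⟨i, hin, hq.1⟩
        hp.2 hq.2 hpq
  convert hP t le_rfl using 1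
  ext v
  simp [P, H, Subgraph.verts_iSup, Fin.is_le]

theorem IsTriangleSubgraph.isRigid (hH : IsTriangleSubgraph G H) : H.IsRigid (Fin 3) := by
  simpa using hH.isTriangleStacked_verts.isRigid

theorem UniquelyKColorable.colorable {k : ℕ} (hG : UniquelyKColorable G k) : G.Colorable k :=
  chromaticNumber_le_iff_colorable.1 hG.1.le

theorem UniquelyKColorable.exists_coloring_deleteEdges_eq {k : ℕ} {x y : V}
    (hG : UniquelyKColorable G k) (h : ¬UniquelyKColorable (G.deleteEdges {s(x, y)}) k) :
    ∃ d : (G.deleteEdges {s(x, y)}).Coloring (Fin k), d x = d y := by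
  by_contra! hne
  refine h ⟨le_antisymm ((chromaticNumber_mono _ (deleteEdges_le _)).trans hG.1.le) ?_,
    fun c₁ c₂ => hG.2 (c₁.ofDeleteEdges (hne c₁)) (c₂.ofDeleteEdges (hne c₂))⟩
  by_contra! hlt
  obtain ⟨m, hm⟩ := ENat.ne_top_iff_exists.1 (hlt.trans (ENat.natCast_lt_top k)).ne
  have hmk : m < k := by rw [← hm] at hlt; exact_mod_cast hlt
  obtain ⟨d⟩ := chromaticNumber_le_iff_colorable.1 hm.ge
  have hd : d x ≠ d y := fun hxy => hne (Coloring.mk (fun v => Fin.castLE hmk.le (d v))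
    fun hab h => d.valid hab (Fin.castLE_injective _ h)) (congrArg (Fin.castLE hmk.le) hxy)
  have hGm := Colorable.chromaticNumber_le ⟨d.ofDeleteEdges hd⟩
  rw [hG.1, Nat.cast_le] at hGm
  omega

theorem SimpleGraph.Subgraph.isRigid_of_uniquelyKColorable {k : ℕ}
    (hH : UniquelyKColorable H.coe k) : H.IsRigid (Fin k) :=
  fun d₁ d₂ hd₁ hd₂ u hu w hw => hH.2 (Coloring.mk (fun z => d₁ z) fun h => hd₁ h)
    (Coloring.mk (fun z => d₂ z) fun h => hd₂ h) ⟨u, hu⟩ ⟨w, hw⟩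

theorem EdgeCritical.exists_perm {k : ℕ} {A B : G.Subgraph} (hG : EdgeCritical G k)
    (c : G.Coloring (Fin k)) (hA : A.IsRigid (Fin k)) (hB : B.IsRigid (Fin k)) {x y : V}
    (hxy : G.Adj x y) (hx : x ∈ A.verts \ B.verts) (hy : y ∈ B.verts \ A.verts) :
    ∃ ρ : Perm (Fin k),
      (∀ x' ∈ A.verts, ∀ y' ∈ B.verts, G.Adj x' y' → (ρ (c y') = c x' ↔ s(x', y') = s(x, y))) ∧
      ∀ v ∈ A.verts ∩ B.verts, ρ (c v) = c v := by
  obtain ⟨d, hd⟩ := hG.1.exists_coloring_deleteEdges_eq (hG.2 _ (G.mem_edgeSet.2 hxy))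
  obtain ⟨ρ, hρ⟩ :=
    (hA.samePartitionOn_deleteEdges c d fun h => hy.2 (A.mem_edgeSet.1 h).snd_mem).exists_perm_glue
      (hB.samePartitionOn_deleteEdges c d fun h => hx.2 (B.mem_edgeSet.1 h).fst_mem)
  refine ⟨ρ, fun x' hx' y' hy' hadj => ?_, fun v hv => (hρ v hv.1 v hv.2).1 rfl⟩
  rw [← hρ x' hx' y' hy']
  constructor
  · contrapose
    exact fun hne => d.valid (deleteEdges_adj.2 ⟨hadj, hne⟩)
  · intro he
    rcases Sym2.eq_iff.1 he with ⟨rfl, rfl⟩ | ⟨rfl, rfl⟩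
    exacts [hd, hd.symm]

theorem EdgeCritical.inter_verts_subsingleton {A : G.Subgraph} (hG : EdgeCritical G 3)
    (hA : A.IsRigid (Fin 3)) (hH : IsTriangleSubgraph G H) (hdisj : A.edgeSet ∩ H.edgeSet = ∅) :
    (A.verts ∩ H.verts).Subsingleton := by
  obtain ⟨c⟩ := hG.1.colorable
  intro v hv w hw
  by_contra hvw
  obtain ⟨p, q, hpq, hforced⟩ := hH.isTriangleStacked_verts.exists_adj_forced
    (fun _ _ h => c.valid (H.adj_sub h)) hv.2 hw.2 hvw
  have hpqA : s(p, q) ∉ A.edgeSet := fun h => hdisj.subset ⟨h, H.mem_edgeSet.2 hpq⟩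
  obtain ⟨d, hd⟩ := hG.1.exists_coloring_deleteEdges_eq (hG.2 _ (G.mem_edgeSet.2 (H.adj_sub hpq)))
  exact hforced d (fun _ _ hab hne => d.valid (deleteEdges_adj.2 ⟨H.adj_sub hab, hne⟩))
    (hA.samePartitionOn_deleteEdges c d hpqA hv.1 hw.1).symm hd

theorem EdgeCritical.ncard_edgesBetween_diff_le_one {A B : G.Subgraph} (hG : EdgeCritical G 3)
    (hA : A.IsRigid (Fin 3)) (hB : B.IsRigid (Fin 3)) (hAB : (A.verts ∩ B.verts).Subsingleton)
    {v : V} (hv : v ∈ A.verts ∩ B.verts) :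
    (edgesBetween G (A.verts \ {v}) (B.verts \ {v})).ncard ≤ 1 := by
  obtain ⟨c⟩ := hG.1.colorable
  have hsub : (edgesBetween G (A.verts \ {v}) (B.verts \ {v})).Subsingleton := by
    rintro _ ⟨x, ⟨hx, hxv⟩, y, ⟨hy, hyv⟩, hxy, rfl⟩ _ ⟨x', ⟨hx', hxv'⟩, y', ⟨hy', hyv'⟩, hxy', rfl⟩
    obtain ⟨ρ, hρ, hfix⟩ := hG.exists_perm c hA hB hxy ⟨hx, fun h => hxv (hAB ⟨hx, h⟩ hv)⟩
      ⟨hy, fun h => hyv (hAB ⟨h, hy⟩ hv)⟩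
    obtain ⟨ρ', hρ', hfix'⟩ := hG.exists_perm c hA hB hxy'
      ⟨hx', fun h => hxv' (hAB ⟨hx', h⟩ hv)⟩ ⟨hy', fun h => hyv' (hAB ⟨h, hy'⟩ hv)⟩
    refine ((hρ x' hx' y' hy' hxy').1 ?_).symm
    exact fin_three_perm_apply_eq_of_fixed (hfix v hv) (hfix' v hv) (c.valid hxy) (c.valid hxy')
      ((hρ x hx y hy hxy).2 rfl) ((hρ' x' hx' y' hy' hxy').2 rfl)
  exact (Set.ncard_le_one hsub.finite).2 fun _ ha _ hb => hsub ha hb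

theorem EdgeCritical.ncard_edgesBetween_le_three {A B : G.Subgraph} (hG : EdgeCritical G 3)
    (hA : A.IsRigid (Fin 3)) (hB : B.IsRigid (Fin 3)) (hAB : A.verts ∩ B.verts = ∅) :
    (edgesBetween G A.verts B.verts).ncard ≤ 3 := by
  obtain ⟨c⟩ := hG.1.colorable
  rw [← Nat.card_coe_set_eq, ← Set.ncard_univ]
  choose x hx y hy hxy hxy_eq using fun e : edgesBetween G A.verts B.verts => e.2
  refine ncard_le_three_of_exists_perm (fun e => c (x e)) (fun e => c (y e))
    (fun e _ => c.valid (hxy e)) fun e _ => ?_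
  obtain ⟨ρ, hρ, -⟩ := hG.exists_perm c hA hB (hxy e)
    ⟨hx e, fun h => hAB.subset ⟨hx e, h⟩⟩ ⟨hy e, fun h => hAB.subset ⟨h, hy e⟩⟩
  refine ⟨ρ, fun f _ => ?_⟩
  rw [hρ _ (hx f) _ (hy f) (hxy f), ← hxy_eq f, ← hxy_eq e, Subtype.coe_inj]

end

theorem stmt_12_general {V : Type} (G : SimpleGraph V) (hG : EdgeCritical G 3)
    (G₀ H₁ : G.Subgraph) (h₀ : UniquelyKColorable G₀.coe 3)
    (h₁ : MaximalTriangleSubgraph G H₁)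
    (hdisj : G₀.edgeSet ∩ H₁.edgeSet = ∅) :
    (∀ v ∈ G₀.verts ∩ H₁.verts,
        (edgesBetween G (G₀.verts \ {v}) (H₁.verts \ {v})).ncard ≤ 1) ∧
      (G₀.verts ∩ H₁.verts = ∅ →
        (edgesBetween G G₀.verts H₁.verts).ncard ≤ 3) := by
  have hG₀ := Subgraph.isRigid_of_uniquelyKColorable h₀
  have hH₁ := h₁.1.isRigid
  exact ⟨fun v hv => hG.ncard_edgesBetween_diff_le_one hG₀ hH₁
      (hG.inter_verts_subsingleton hG₀ h₁.1 hdisj) hv,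
    hG.ncard_edgesBetween_le_three hG₀ hH₁⟩

/-- (Theorem 3.6(ii)) With `G₀` a uniquely 3-colorable subgraph and `H₁` an
edge-disjoint maximal triangle-subgraph: if they share a common vertex `v` there is
at most one edge between `V(G₀) \ {v}` and `V(H₁) \ {v}`; if they are vertex-disjoint
there are at most 3 edges between `V(G₀)` and `V(H₁)`. -/
theorem stmt_12 {V : Type} (G : SimpleGraph V) (hG : EdgeCritical G 3)
    (hsep : NoSeparating3Cycle G)
    (G₀ H₁ : G.Subgraph) (h₀ : UniquelyKColorable G₀.coe 3)
    (h₁ : MaximalTriangleSubgraph G H₁)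
    (hdisj : G₀.edgeSet ∩ H₁.edgeSet = ∅) :
    (∀ v ∈ G₀.verts ∩ H₁.verts,
        (edgesBetween G (G₀.verts \ {v}) (H₁.verts \ {v})).ncard ≤ 1) ∧
      (G₀.verts ∩ H₁.verts = ∅ →
        (edgesBetween G G₀.verts H₁.verts).ncard ≤ 3) :=
  stmt_12_general G hG G₀ H₁ h₀ h₁ hdisj
end

section
/- Let G be a uniquely 3-colorable graph and let G₁, G₂, G₃ be uniquely 3-colorable subgraphs of G such that G₁ and G₂ share a vertex a, G₂ and G₃ share a vertex b, G₁ and G₃ share a vertex c, with a, b, c pairwise distinct, and such that in the unique 3-coloring of G the colors of a, b, c are pairwise distinct. Then G₁ ∪ G₂ ∪ G₃ is uniquely 3-colorable. -/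
open SimpleGraph

private lemma fin3_cases : ∀ x y z w : Fin 3,
    x ≠ y → y ≠ z → x ≠ z → (w = x ∨ w = y ∨ w = z) := by
  intro x y z w
  fin_cases x <;> fin_cases y <;> fin_cases z <;> fin_cases w <;> simp

private lemma fin3_third_s13 (x y z w x' y' z' w' : Fin 3)
    (hxy : x ≠ y) (hyz : y ≠ z) (hxz : x ≠ z)
    (hxy' : x' ≠ y') (hyz' : y' ≠ z') (hxz' : x' ≠ z')
    (h1 : w = x ↔ w' = x') (h2 : w = y ↔ w' = y') : (w = z ↔ w' = z') := by
  constructor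
  · intro h
    rcases fin3_cases x' y' z' w' hxy' hyz' hxz' with h' | h' | h'
    · exact absurd ((h1.mpr h').symm.trans h) hxz
    · exact absurd ((h2.mpr h').symm.trans h) hyz
    · exact h'
  · intro h
    rcases fin3_cases x y z w hxy hyz hxz with h' | h' | h'
    · exact absurd ((h1.mp h').symm.trans h) hxz'
    · exact absurd ((h2.mp h').symm.trans h) hyz'
    · exact h' 

/-- (Theorem 3.6(iii)) If three uniquely 3-colorable subgraphs of a uniquely
3-colorable graph pairwise share vertices `a`, `b`, `c` which are pairwise distinct
and receive pairwise distinct colors in the unique 3-coloring of `G`, then their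
union is uniquely 3-colorable. -/
theorem stmt_13 {V : Type} (G : SimpleGraph V) (hG : UniquelyKColorable G 3)
    (G₁ G₂ G₃ : G.Subgraph)
    (h₁ : UniquelyKColorable G₁.coe 3) (h₂ : UniquelyKColorable G₂.coe 3)
    (h₃ : UniquelyKColorable G₃.coe 3)
    (a b c : V)
    (ha : a ∈ G₁.verts ∩ G₂.verts) (hb : b ∈ G₂.verts ∩ G₃.verts)
    (hc : c ∈ G₁.verts ∩ G₃.verts)
    (hab : a ≠ b) (hbc : b ≠ c) (hac : a ≠ c)
    (hcol : ∀ f : G.Coloring (Fin 3), f a ≠ f b ∧ f b ≠ f c ∧ f a ≠ f c) :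
    UniquelyKColorable (G₁ ⊔ G₂ ⊔ G₃).coe 3 := by
  obtain ⟨ha1, ha2⟩ := ha
  obtain ⟨hb2, hb3⟩ := hb
  obtain ⟨hc1, hc3⟩ := hc
  have hle1 : G₁ ≤ G₁ ⊔ G₂ ⊔ G₃ := le_sup_of_le_left le_sup_left
  have hle2 : G₂ ≤ G₁ ⊔ G₂ ⊔ G₃ := le_sup_of_le_left le_sup_right
  have hle3 : G₃ ≤ G₁ ⊔ G₂ ⊔ G₃ := le_sup_right
  have haH : a ∈ (G₁ ⊔ G₂ ⊔ G₃).verts := hle1.1 ha1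
  have hbH : b ∈ (G₁ ⊔ G₂ ⊔ G₃).verts := hle2.1 hb2
  have hcH : c ∈ (G₁ ⊔ G₂ ⊔ G₃).verts := hle3.1 hc3
  obtain ⟨f⟩ : G.Colorable 3 := by
    rw [← SimpleGraph.chromaticNumber_le_iff_colorable]
    exact le_of_eq hG.1
  have key : ∀ d : (G₁ ⊔ G₂ ⊔ G₃).coe.Coloring (Fin 3),
      d ⟨a, haH⟩ ≠ d ⟨b, hbH⟩ ∧ d ⟨b, hbH⟩ ≠ d ⟨c, hcH⟩ ∧ d ⟨a, haH⟩ ≠ d ⟨c, hcH⟩ := by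
    intro d
    obtain ⟨hfab, hfbc, hfac⟩ := hcol f
    refine ⟨fun h => hfab ?_, fun h => hfbc ?_, fun h => hfac ?_⟩
    · exact (h₂.2 (d.comp (SimpleGraph.Subgraph.inclusion hle2)) (f.comp G₂.hom)
        ⟨a, ha2⟩ ⟨b, hb2⟩).mp h
    · exact (h₃.2 (d.comp (SimpleGraph.Subgraph.inclusion hle3)) (f.comp G₃.hom)
        ⟨b, hb3⟩ ⟨c, hc3⟩).mp h
    · exact (h₁.2 (d.comp (SimpleGraph.Subgraph.inclusion hle1)) (f.comp G₁.hom)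
        ⟨a, ha1⟩ ⟨c, hc1⟩).mp h
  constructor
  · apply le_antisymm
    · exact SimpleGraph.Colorable.chromaticNumber_le ⟨f.comp (G₁ ⊔ G₂ ⊔ G₃).hom⟩
    · calc ((3 : ℕ) : ℕ∞) = G₁.coe.chromaticNumber := h₁.1.symm
        _ ≤ _ := SimpleGraph.chromaticNumber_le_of_forall_imp
            (fun n hn => ⟨hn.some.comp (SimpleGraph.Subgraph.inclusion hle1)⟩)
  · intro c₁ c₂ u v
    have hd1 := key c₁
    have hd2 := key c₂
    have hB : ∀ w : ↥(G₁ ⊔ G₂ ⊔ G₃).verts,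
        (c₁ w = c₁ ⟨a, haH⟩ ↔ c₂ w = c₂ ⟨a, haH⟩) ∧
        (c₁ w = c₁ ⟨b, hbH⟩ ↔ c₂ w = c₂ ⟨b, hbH⟩) ∧
        (c₁ w = c₁ ⟨c, hcH⟩ ↔ c₂ w = c₂ ⟨c, hcH⟩) := by
      intro w
      have hw : (w : V) ∈ G₁.verts ∪ G₂.verts ∪ G₃.verts := w.2
      rcases hw with (hw | hw) | hw
      · have hia : c₁ w = c₁ ⟨a, haH⟩ ↔ c₂ w = c₂ ⟨a, haH⟩ :=
          h₁.2 (c₁.comp (SimpleGraph.Subgraph.inclusion hle1))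
            (c₂.comp (SimpleGraph.Subgraph.inclusion hle1)) ⟨w.1, hw⟩ ⟨a, ha1⟩
        have hic : c₁ w = c₁ ⟨c, hcH⟩ ↔ c₂ w = c₂ ⟨c, hcH⟩ :=
          h₁.2 (c₁.comp (SimpleGraph.Subgraph.inclusion hle1))
            (c₂.comp (SimpleGraph.Subgraph.inclusion hle1)) ⟨w.1, hw⟩ ⟨c, hc1⟩
        exact ⟨hia, fin3_third_s13 _ _ _ _ _ _ _ _ hd1.2.2 (Ne.symm hd1.2.1) hd1.1
          hd2.2.2 (Ne.symm hd2.2.1) hd2.1 hia hic, hic⟩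
      · have hia : c₁ w = c₁ ⟨a, haH⟩ ↔ c₂ w = c₂ ⟨a, haH⟩ :=
          h₂.2 (c₁.comp (SimpleGraph.Subgraph.inclusion hle2))
            (c₂.comp (SimpleGraph.Subgraph.inclusion hle2)) ⟨w.1, hw⟩ ⟨a, ha2⟩
        have hib : c₁ w = c₁ ⟨b, hbH⟩ ↔ c₂ w = c₂ ⟨b, hbH⟩ :=
          h₂.2 (c₁.comp (SimpleGraph.Subgraph.inclusion hle2))
            (c₂.comp (SimpleGraph.Subgraph.inclusion hle2)) ⟨w.1, hw⟩ ⟨b, hb2⟩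
        exact ⟨hia, hib, fin3_third_s13 _ _ _ _ _ _ _ _ hd1.1 hd1.2.1 hd1.2.2
          hd2.1 hd2.2.1 hd2.2.2 hia hib⟩
      · have hib : c₁ w = c₁ ⟨b, hbH⟩ ↔ c₂ w = c₂ ⟨b, hbH⟩ :=
          h₃.2 (c₁.comp (SimpleGraph.Subgraph.inclusion hle3))
            (c₂.comp (SimpleGraph.Subgraph.inclusion hle3)) ⟨w.1, hw⟩ ⟨b, hb3⟩
        have hic : c₁ w = c₁ ⟨c, hcH⟩ ↔ c₂ w = c₂ ⟨c, hcH⟩ :=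
          h₃.2 (c₁.comp (SimpleGraph.Subgraph.inclusion hle3))
            (c₂.comp (SimpleGraph.Subgraph.inclusion hle3)) ⟨w.1, hw⟩ ⟨c, hc3⟩
        exact ⟨fin3_third_s13 _ _ _ _ _ _ _ _ hd1.2.1 (Ne.symm hd1.2.2) (Ne.symm hd1.1)
          hd2.2.1 (Ne.symm hd2.2.2) (Ne.symm hd2.1) hib hic, hib, hic⟩
    constructor
    · intro h
      obtain h' | h' | h' := fin3_cases _ _ _ (c₁ u) hd1.1 hd1.2.1 hd1.2.2
      · exact ((hB u).1.mp h').trans (((hB v).1.mp (h.symm.trans h')).symm)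
      · exact ((hB u).2.1.mp h').trans (((hB v).2.1.mp (h.symm.trans h')).symm)
      · exact ((hB u).2.2.mp h').trans (((hB v).2.2.mp (h.symm.trans h')).symm)
    · intro h
      obtain h' | h' | h' := fin3_cases _ _ _ (c₂ u) hd2.1 hd2.2.1 hd2.2.2
      · exact ((hB u).1.mpr h').trans (((hB v).1.mpr (h.symm.trans h')).symm)
      · exact ((hB u).2.1.mpr h').trans (((hB v).2.1.mpr (h.symm.trans h')).symm)
      · exact ((hB u).2.2.mpr h').trans (((hB v).2.2.mpr (h.symm.trans h')).symm)
end

section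
/- If G is an edge-critical uniquely 3-colorable graph and v is a vertex of G with degree 2, then G - v is uniquely 3-colorable and edge-critical, provided |V(G)| ≥ 4. -/
open SimpleGraph

/-!
In a uniquely `k`-colorable graph every color other than that of `v` appears on a neighbor
of `v`, since otherwise `v` could be recolored. If `v` has only the two neighbors `a` and `b`
(and `k = 3`), then `a` and `b` get distinct colors and `v` gets the third one.

Because `v` has fewer than three neighbors, every 3-coloring of `G - v` extends to `G`, so
`G - v` inherits uniqueness from `G`. A 2-coloring of `G - v` would extend to a 3-coloring of
`G` in which `v` alone has the third color; then `v` would be adjacent to every other vertex,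
which is impossible when `|V| ≥ 4`. Conversely, since the color of `v` is forced by those of
`a` and `b`, unique 3-colorability of `G - v - e` lifts to `G - e`. This would contradict the
edge-criticality of `G`.
-/

theorem Fin.exists_ne_ne_three (x z : Fin 3) : ∃ y, y ≠ x ∧ y ≠ z := by
  revert x z; decide

theorem Fin.eq_iff_ne_ne_three {x y z : Fin 3} (hxy : x ≠ y) (hzx : z ≠ x) (hzy : z ≠ y)
    (t : Fin 3) : z = t ↔ t ≠ x ∧ t ≠ y := by
  revert x y z t; decide

namespace SimpleGraph

variable {V : Type} {G : SimpleGraph V}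

theorem Coloring.colorable_of_forall_ne {k : ℕ} (d : G.Coloring (Fin (k + 1))) (y : Fin (k + 1))
    (hy : ∀ w, d w ≠ y) : G.Colorable k := by
  have h := (Coloring.mk (fun w => (⟨d w, hy w⟩ : {c // c ≠ y}))
    fun hadj heq => d.valid hadj (congrArg Subtype.val heq)).colorable
  simpa using h

theorem Coloring.exists_extend_induce_ne {α : Type} {v : V}
    (c : (G.induce {u | u ≠ v}).Coloring α) (y : α)
    (hy : ∀ w (h : G.Adj v w), c ⟨w, h.ne'⟩ ≠ y) :
    ∃ d : G.Coloring α, d v = y ∧ ∀ x, d x.1 = c x := by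
  classical
  refine ⟨Coloring.mk (fun u => if h : u = v then y else c ⟨u, h⟩) ?_, dif_pos rfl,
    fun x => dif_neg x.2⟩
  intro u w hadj
  by_cases hu : u = v <;> by_cases hw : w = v
  · exact absurd (hu.trans hw.symm) hadj.ne
  · subst hu; simpa [hw] using (hy w hadj).symm
  · subst hw; simpa [hu] using hy u hadj.symm
  · simpa [hu, hw] using c.valid (show (G.induce {u | u ≠ v}).Adj ⟨u, hu⟩ ⟨w, hw⟩ from hadj)

theorem Coloring.exists_extend_of_ncard_neighborSet_lt {k : ℕ} {v : V}
    (hfin : (G.neighborSet v).Finite) (hdeg : (G.neighborSet v).ncard < k)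
    (c : (G.induce {u | u ≠ v}).Coloring (Fin k)) :
    ∃ d : G.Coloring (Fin k), ∀ x, d x.1 = c x := by
  have : Finite (G.neighborSet v) := hfin.to_subtype
  let nbrColor : G.neighborSet v → Fin k := fun w => c ⟨w, w.2.ne'⟩
  have hlt : (Set.range nbrColor).ncard < Nat.card (Fin k) := by
    calc (Set.range nbrColor).ncard = (nbrColor '' Set.univ).ncard := by rw [Set.image_univ]
      _ ≤ (Set.univ : Set (G.neighborSet v)).ncard := Set.ncard_image_le
      _ < Nat.card (Fin k) := by simpa [Set.ncard_univ, Nat.card_coe_set_eq] using hdeg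
  obtain ⟨y, hy⟩ : ∃ y, y ∉ Set.range nbrColor := by
    by_contra! h
    exact hlt.ne (by rw [Set.eq_univ_of_forall h, Set.ncard_univ])
  obtain ⟨d, -, hd⟩ := c.exists_extend_induce_ne y fun w hw h => hy ⟨⟨w, hw⟩, h⟩
  exact ⟨d, hd⟩

theorem deleteEdges_map_val_induce (s : Set V) (e : Sym2 s) :
    (G.deleteEdges {e.map Subtype.val}).induce s = (G.induce s).deleteEdges {e} := by
  ext x y
  simp only [comap_adj, deleteEdges_adj, Set.mem_singleton_iff, Function.Embedding.subtype_apply,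
    ← Sym2.map_mk, (Sym2.map.injective Subtype.val_injective).eq_iff]

end SimpleGraph

namespace UniquelyKColorable

variable {V : Type} {G : SimpleGraph V} {k : ℕ}

theorem colorable_s18 (h : UniquelyKColorable G k) : G.Colorable k := by
  rw [← chromaticNumber_le_iff_colorable, h.1]

theorem not_colorable (h : UniquelyKColorable G (k + 1)) : ¬ G.Colorable k :=
  ((chromaticNumber_eq_iff_colorable_not_colorable.mp (by exact_mod_cast h.1)).2)

theorem of_colorable (hcol : G.Colorable (k + 1)) (hncol : ¬ G.Colorable k)
    (huniq : ∀ c₁ c₂ : G.Coloring (Fin (k + 1)), ∀ u v, c₁ u = c₁ v ↔ c₂ u = c₂ v) :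
    UniquelyKColorable G (k + 1) :=
  ⟨by exact_mod_cast chromaticNumber_eq_iff_colorable_not_colorable.mpr ⟨hcol, hncol⟩, huniq⟩

theorem exists_adj_eq_color (h : UniquelyKColorable G (k + 1)) (d : G.Coloring (Fin (k + 1)))
    (v : V) {y : Fin (k + 1)} (hy : y ≠ d v) : ∃ w, G.Adj v w ∧ d w = y := by
  by_contra! hnbr
  let r : (G.induce {u | u ≠ v}).Coloring (Fin (k + 1)) := d.comp (Embedding.induce _).toHom
  obtain ⟨d', hd'v, hd'⟩ := r.exists_extend_induce_ne y fun w hw => hnbr w hw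
  refine h.not_colorable (d.colorable_of_forall_ne y fun w hw => ?_)
  by_cases hwv : w = v
  · exact hy (hwv ▸ hw.symm)
  · have hsame : d' v = d' w := by rw [hd'v, hd' ⟨w, hwv⟩]; exact hw.symm
    exact hy (((h.2 d d' v w).mpr hsame).trans hw).symm

theorem adj_of_forall_color_ne (h : UniquelyKColorable G (k + 1)) (d : G.Coloring (Fin (k + 1)))
    {v : V} (hv : ∀ w, w ≠ v → d w ≠ d v) {u : V} (hu : u ≠ v) : G.Adj u v := by
  obtain ⟨w, huw, hw⟩ := h.exists_adj_eq_color d u (hv u hu).symm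
  by_cases hwv : w = v
  · exact hwv ▸ huw
  · exact absurd hw (hv w hwv)

theorem not_colorable_induce_ne [Finite V] (h : UniquelyKColorable G (k + 1)) {v : V}
    (hdeg : (G.neighborSet v).ncard < k + 1) (hcard : (G.neighborSet v).ncard + 1 < Nat.card V) :
    ¬ (G.induce {u | u ≠ v}).Colorable k := by
  rintro ⟨c⟩
  let c' : (G.induce {u | u ≠ v}).Coloring (Fin (k + 1)) :=
    (Embedding.completeGraph Fin.castSuccEmb).toHom.comp c
  obtain ⟨d, hd⟩ := c'.exists_extend_of_ncard_neighborSet_lt (Set.toFinite _) hdeg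
  have hd_ne : ∀ w (hw : w ≠ v), d w ≠ Fin.last k := fun w hw => by
    rw [hd ⟨w, hw⟩]; exact Fin.castSucc_ne_last _
  have hdv : d v = Fin.last k := by
    by_contra hne
    obtain ⟨w, hvw, hw⟩ := h.exists_adj_eq_color d v (Ne.symm hne)
    exact hd_ne w hvw.ne' hw
  have hsub : {v}ᶜ ⊆ G.neighborSet v := fun u hu =>
    (h.adj_of_forall_color_ne d (fun w hw => hdv ▸ hd_ne w hw) hu).symm
  have := Set.ncard_le_ncard hsub
  rw [Set.ncard_compl, Set.ncard_singleton] at this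
  omega

theorem induce_ne [Finite V] (h : UniquelyKColorable G (k + 1)) {v : V}
    (hdeg : (G.neighborSet v).ncard < k + 1) (hcard : (G.neighborSet v).ncard + 1 < Nat.card V) :
    UniquelyKColorable (G.induce {u | u ≠ v}) (k + 1) := by
  refine of_colorable (h.colorable_s18.of_hom (Embedding.induce _).toHom)
    (h.not_colorable_induce_ne hdeg hcard) fun c₁ c₂ x y => ?_
  obtain ⟨d₁, hd₁⟩ := c₁.exists_extend_of_ncard_neighborSet_lt (Set.toFinite _) hdeg
  obtain ⟨d₂, hd₂⟩ := c₂.exists_extend_of_ncard_neighborSet_lt (Set.toFinite _) hdeg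
  simpa only [hd₁, hd₂] using h.2 d₁ d₂ x y

theorem color_ne_of_neighborSet_eq_pair {v a b : V} (h : UniquelyKColorable G 3)
    (hN : G.neighborSet v = {a, b}) (d : G.Coloring (Fin 3)) : d a ≠ d b := by
  intro hab
  obtain ⟨y, hyv, hya⟩ := Fin.exists_ne_ne_three (d v) (d a)
  obtain ⟨w, hvw, hw⟩ := h.exists_adj_eq_color d v hyv
  have hw' : w ∈ ({a, b} : Set V) := hN ▸ hvw
  rcases hw' with rfl | rfl
  · exact hya hw.symm
  · exact hya (hw ▸ hab.symm)

theorem of_induce_ne_of_neighborSet_eq_pair {v a b : V} (hN : G.neighborSet v = {a, b})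
    (hH : UniquelyKColorable (G.induce {u | u ≠ v}) 3) (d : G.Coloring (Fin 3))
    (hd : d a ≠ d b) : UniquelyKColorable G 3 := by
  have hva : G.Adj v a := by simp [← mem_neighborSet, hN]
  have hvb : G.Adj v b := by simp [← mem_neighborSet, hN]
  let restrict (d' : G.Coloring (Fin 3)) : (G.induce {u | u ≠ v}).Coloring (Fin 3) :=
    d'.comp (Embedding.induce _).toHom
  have hsame : ∀ d₁ d₂ : G.Coloring (Fin 3), ∀ x y, x ≠ v → y ≠ v →
      (d₁ x = d₁ y ↔ d₂ x = d₂ y) := fun d₁ d₂ x y hx hy =>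
    hH.2 (restrict d₁) (restrict d₂) ⟨x, hx⟩ ⟨y, hy⟩
  have hcolor_v : ∀ d' : G.Coloring (Fin 3), ∀ w, d' v = d' w ↔ d' w ≠ d' a ∧ d' w ≠ d' b :=
    fun d' w => Fin.eq_iff_ne_ne_three
      (fun hab => hd ((hsame d' d a b hva.ne' hvb.ne').mp hab)) (d'.valid hva) (d'.valid hvb)
      (d' w)
  refine of_colorable ⟨d⟩ (fun h2 => hH.not_colorable (h2.of_hom (Embedding.induce _).toHom))
    fun d₁ d₂ x y => ?_
  have hv : ∀ w, d₁ v = d₁ w ↔ d₂ v = d₂ w := by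
    intro w
    rcases eq_or_ne w v with rfl | hw
    · simp
    · rw [hcolor_v, hcolor_v, ne_eq, ne_eq, ne_eq, ne_eq, hsame d₁ d₂ w a hw hva.ne',
        hsame d₁ d₂ w b hw hvb.ne']
  rcases eq_or_ne x v with rfl | hx
  · exact hv y
  rcases eq_or_ne y v with rfl | hy
  · rw [eq_comm, hv x, eq_comm]
  · exact hsame d₁ d₂ x y hx hy

end UniquelyKColorable

namespace EdgeCritical

variable {V : Type} {G : SimpleGraph V} {v a b : V}

theorem induce_ne_of_neighborSet_eq_pair (hG : EdgeCritical G 3) (hN : G.neighborSet v = {a, b})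
    (hH : UniquelyKColorable (G.induce {u | u ≠ v}) 3) :
    EdgeCritical (G.induce {u | u ≠ v}) 3 := by
  refine ⟨hH, fun e he hH' => ?_⟩
  obtain ⟨d⟩ := hG.1.colorable_s18
  have hv : v ∉ e.map Subtype.val := by
    rw [Sym2.mem_map]
    rintro ⟨x, -, hx⟩
    exact x.2 hx
  have hN' : (G.deleteEdges {e.map Subtype.val}).neighborSet v = {a, b} := by
    rw [← hN]
    ext w
    simp only [mem_neighborSet, deleteEdges_adj, Set.mem_singleton_iff, and_iff_left_iff_imp]
    exact fun _ hvw => hv (hvw ▸ Sym2.mem_mk_left v w)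
  have he' : e.map Subtype.val ∈ G.edgeSet := (Embedding.induce _).map_mem_edgeSet_iff.mpr he
  refine hG.2 _ he'
    (UniquelyKColorable.of_induce_ne_of_neighborSet_eq_pair hN'
      (by rwa [deleteEdges_map_val_induce]) (d.comp (Hom.ofLE (deleteEdges_le _)))
      (hG.1.color_ne_of_neighborSet_eq_pair hN d))

end EdgeCritical

/-- Deleting a degree-2 vertex from an edge-critical uniquely 3-colorable graph with
at least 4 vertices yields a uniquely 3-colorable, edge-critical graph. -/
theorem stmt_18 {V : Type} [Fintype V] (G : SimpleGraph V) (hG : EdgeCritical G 3)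
    (v : V) (hdeg : {u : V | G.Adj v u}.ncard = 2) (hcard : 4 ≤ Fintype.card V) :
    UniquelyKColorable (G.induce {u : V | u ≠ v}) 3 ∧
      EdgeCritical (G.induce {u : V | u ≠ v}) 3 := by
  have hdeg' : (G.neighborSet v).ncard = 2 := hdeg
  obtain ⟨a, b, -, hN⟩ := Set.ncard_eq_two.mp hdeg'
  have hH : UniquelyKColorable (G.induce {u | u ≠ v}) 3 :=
    hG.1.induce_ne (by omega) (by rw [Nat.card_eq_fintype_card]; omega)
  exact ⟨hH, hG.induce_ne_of_neighborSet_eq_pair hN hH⟩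
end
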